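/- arXiv:1607.08684 — 12 statements merged into one kernel-verified Lean document; each statement's English description precedes it below -/
import Mathlib

section
/- Let (g_n)_{n≥1} be a sequence of functions from ℝ to [0,1], each nonincreasing, such that for every n, g_n(x) → 1 as x → −∞ and g_n(x) → 0 as x → +∞, and such that for every ε > 0 the sequence (g_n) converges uniformly on ℝ \ [−ε, ε] to the indicator function of {x ≤ 0} as n → ∞. Let F : ℝ → ℝ be continuous, and let (μ_n)_{n≥1} be Borel probability measures on ℝ such that for every s ∈ ℝ, ∫_ℝ g_n(x − s) dμ_n(x) → F(s) as n → ∞. Then for every s ∈ ℝ, μ_n((−∞, s]) → F(s) as n → ∞. -/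
open MeasureTheory Filter Topology

/-!
Away from `[-η, η]` each `g n` is uniformly within `ε` of the step `1_{y ≤ 0}`, so for `δ > η`
the shifted functions `x ↦ g n (x - (s ± δ))` sandwich the indicator of `(-∞, s]` up to `ε`:
`g n (x - (s - δ)) - ε ≤ 1_{x ≤ s} ≤ g n (x - (s + δ)) + ε`. Integrating against `μ n` traps
`μ n (-∞, s]` between two sequences converging to `F (s ∓ δ)`, and continuity of `F` at `s`
closes the gap as `δ → 0`.
-/

theorem tendsto_of_eventually_shift_sandwich {ι : Type*} {l : Filter ι} {u : ι → ℝ → ℝ}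
    {F : ℝ → ℝ} {a : ι → ℝ} {s : ℝ} (hF : ContinuousAt F s)
    (hu : ∀ t, Tendsto (fun i => u i t) l (𝓝 (F t)))
    (hsandwich : ∀ δ > 0, ∀ ε > 0, ∀ᶠ i in l, u i (s - δ) - ε ≤ a i ∧ a i ≤ u i (s + δ) + ε) :
    Tendsto a l (𝓝 (F s)) := by
  refine Metric.tendsto_nhds.2 fun ε hε => ?_
  obtain ⟨δ, hδ, hFδ⟩ := Metric.continuousAt_iff.1 hF (ε / 3) (by positivity)
  have hFlo := hFδ (x := s - δ / 2) (by rw [Real.dist_eq, abs_lt]; constructor <;> linarith)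
  have hFup := hFδ (x := s + δ / 2) (by rw [Real.dist_eq, abs_lt]; constructor <;> linarith)
  filter_upwards [hsandwich (δ / 2) (by positivity) (ε / 3) (by positivity),
    Metric.tendsto_nhds.1 (hu (s - δ / 2)) (ε / 3) (by positivity),
    Metric.tendsto_nhds.1 (hu (s + δ / 2)) (ε / 3) (by positivity)] with i ⟨hlo, hup⟩ hulo huup
  rw [Real.dist_eq, abs_lt] at hFlo hFup hulo huup ⊢
  constructor <;> linarith [hFlo.1, hFup.2, hulo.1, huup.2]

section StepApproximation

variable {h : ℝ → ℝ} {η ε s t : ℝ}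

lemma indicator_Iic_le_comp_sub_add (h0 : ∀ y, 0 ≤ h y) (hη : 0 ≤ η) (hε : 0 ≤ ε)
    (hclose : ∀ y ∈ (Set.Icc (-η) η)ᶜ, dist (if y ≤ 0 then (1 : ℝ) else 0) (h y) < ε)
    (hst : s + η < t) (x : ℝ) :
    (Set.Iic s).indicator 1 x ≤ h (x - t) + ε := by
  rcases le_or_gt x s with hx | hx
  · have hfar : x - t ∈ (Set.Icc (-η) η)ᶜ := fun hy => by linarith [hy.1]
    have hd := hclose _ hfar
    rw [if_pos (by linarith), Real.dist_eq, abs_lt] at hd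
    rw [Set.indicator_of_mem (Set.mem_Iic.2 hx), Pi.one_apply]
    linarith [hd.1]
  · rw [Set.indicator_of_notMem (by simpa using hx)]
    linarith [h0 (x - t)]

lemma comp_sub_le_indicator_Iic_add (h1 : ∀ y, h y ≤ 1) (hη : 0 ≤ η) (hε : 0 ≤ ε)
    (hclose : ∀ y ∈ (Set.Icc (-η) η)ᶜ, dist (if y ≤ 0 then (1 : ℝ) else 0) (h y) < ε)
    (hts : t + η < s) (x : ℝ) :
    h (x - t) ≤ (Set.Iic s).indicator 1 x + ε := by
  rcases le_or_gt x s with hx | hx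
  · rw [Set.indicator_of_mem (Set.mem_Iic.2 hx), Pi.one_apply]
    linarith [h1 (x - t)]
  · have hfar : x - t ∈ (Set.Icc (-η) η)ᶜ := fun hy => by linarith [hy.2]
    have hd := hclose _ hfar
    rw [if_neg (not_le.2 (by linarith)), Real.dist_eq, abs_lt] at hd
    rw [Set.indicator_of_notMem (by simpa using hx)]
    linarith [hd.2]

end StepApproximation

section Integration

variable {μ : Measure ℝ} [IsProbabilityMeasure μ]

lemma integral_le_integral_add_const {f f' : ℝ → ℝ} {c : ℝ} (hf : Integrable f μ)
    (hf' : Integrable f' μ) (hle : ∀ x, f x ≤ f' x + c) :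
    ∫ x, f x ∂μ ≤ ∫ x, f' x ∂μ + c := by
  calc ∫ x, f x ∂μ ≤ ∫ x, (f' x + c) ∂μ := integral_mono hf (hf'.add (integrable_const c)) hle
    _ = ∫ x, f' x ∂μ + c := by rw [integral_add hf' (integrable_const c), integral_const,
        probReal_univ, one_smul]

lemma integrable_comp_sub_of_mem_Icc {h : ℝ → ℝ} (hmeas : Measurable h)
    (hrange : ∀ y, h y ∈ Set.Icc (0 : ℝ) 1) (t : ℝ) :
    Integrable (fun x => h (x - t)) μ :=
  Integrable.of_bound (hmeas.comp (measurable_sub_const t)).aestronglyMeasurable 1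
    (ae_of_all _ fun x => by
      rw [Real.norm_eq_abs, abs_le]
      exact ⟨by linarith [(hrange (x - t)).1], (hrange (x - t)).2⟩)

lemma integral_comp_sub_sandwich_measureReal_Iic {h : ℝ → ℝ} {η ε δ : ℝ} (hmeas : Measurable h)
    (hrange : ∀ y, h y ∈ Set.Icc (0 : ℝ) 1) (hη : 0 ≤ η) (hε : 0 ≤ ε) (hηδ : η < δ)
    (hclose : ∀ y ∈ (Set.Icc (-η) η)ᶜ, dist (if y ≤ 0 then (1 : ℝ) else 0) (h y) < ε) (s : ℝ) :
    ∫ x, h (x - (s - δ)) ∂μ - ε ≤ μ.real (Set.Iic s) ∧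
      μ.real (Set.Iic s) ≤ ∫ x, h (x - (s + δ)) ∂μ + ε := by
  have hind : Integrable ((Set.Iic s).indicator (1 : ℝ → ℝ)) μ :=
    (integrable_const (1 : ℝ)).indicator measurableSet_Iic
  rw [← integral_indicator_one measurableSet_Iic]
  constructor
  · have := integral_le_integral_add_const (integrable_comp_sub_of_mem_Icc hmeas hrange _) hind
      (comp_sub_le_indicator_Iic_add (t := s - δ) (fun y => (hrange y).2) hη hε hclose
        (by linarith))
    linarith
  · exact integral_le_integral_add_const hind (integrable_comp_sub_of_mem_Icc hmeas hrange _)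
      (indicator_Iic_le_comp_sub_add (t := s + δ) (fun y => (hrange y).1) hη hε hclose
        (by linarith))

end Integration

theorem stmt_0_general
    (g : ℕ → ℝ → ℝ)
    (hrange : ∀ n x, g n x ∈ Set.Icc (0 : ℝ) 1)
    (hanti : ∀ n, Antitone (g n))
    (hunif : ∀ ε : ℝ, 0 < ε →
      TendstoUniformlyOn g (fun x => if x ≤ 0 then (1 : ℝ) else 0) atTop
        ((Set.Icc (-ε) ε)ᶜ))
    (F : ℝ → ℝ) (hF : Continuous F)
    (μ : ℕ → Measure ℝ) (hprob : ∀ n, IsProbabilityMeasure (μ n))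
    (hexp : ∀ s : ℝ, Tendsto (fun n => ∫ x, g n (x - s) ∂(μ n)) atTop (𝓝 (F s))) :
    ∀ s : ℝ, Tendsto (fun n => ((μ n) (Set.Iic s)).toReal) atTop (𝓝 (F s)) := by
  intro s
  refine tendsto_of_eventually_shift_sandwich hF.continuousAt hexp fun δ hδ ε hε => ?_
  filter_upwards [Metric.tendstoUniformlyOn_iff.1 (hunif (δ / 2) (half_pos hδ)) ε hε] with n hn
  exact integral_comp_sub_sandwich_measureReal_Iic (μ := μ n) (hanti n).measurable (hrange n)
    (half_pos hδ).le hε.le (half_lt_self hδ) hn s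

/-- Lemma 4.1.39 of [MP]: convergence of expectations of approximate indicator
functions implies convergence of distribution functions. -/
theorem stmt_0
    (g : ℕ → ℝ → ℝ)
    (hrange : ∀ n x, g n x ∈ Set.Icc (0 : ℝ) 1)
    (hanti : ∀ n, Antitone (g n))
    (hbot : ∀ n, Tendsto (g n) atBot (𝓝 1))
    (htop : ∀ n, Tendsto (g n) atTop (𝓝 0))
    (hunif : ∀ ε : ℝ, 0 < ε →
      TendstoUniformlyOn g (fun x => if x ≤ 0 then (1 : ℝ) else 0) atTop
        ((Set.Icc (-ε) ε)ᶜ))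
    (F : ℝ → ℝ) (hF : Continuous F)
    (μ : ℕ → Measure ℝ) (hprob : ∀ n, IsProbabilityMeasure (μ n))
    (hexp : ∀ s : ℝ, Tendsto (fun n => ∫ x, g n (x - s) ∂(μ n)) atTop (𝓝 (F s))) :
    ∀ s : ℝ, Tendsto (fun n => ((μ n) (Set.Iic s)).toReal) atTop (𝓝 (F s)) :=
  stmt_0_general g hrange hanti hunif F hF μ hprob hexp
end

section
/- For every z ∈ ℂ with z ∉ (−∞, 0], z + q ∉ (−∞, 0], and κ^{−1}z + q ∉ (−∞, 0], the function G_V has a complex derivative at z equal to ((√(κη) − 1)²/(κ − 1)) · (z − ψ_V)² / (z·(z + qκ)·(z + q)). -/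
/-!
Each logarithm differentiates to a simple fraction, so `G_V'` is
`η / (z + qκ) - 1 / (z + q) + m / z`. Over the common denominator the numerator is a quadratic
in `z`; the choice of `m` and `ψ` makes `(κ - 1)` times it the perfect square
`((√(κη) - 1) z - q (κ - √(κη)))² = (√(κη) - 1)² (z - ψ)²`, so `ψ` is a double zero of `G_V'`.
-/

open Complex

lemma hasDerivAt_log_affine {a b z : ℂ} (h : a * z + b ∈ slitPlane) :
    HasDerivAt (fun w => log (a * w + b)) (a / (a * z + b)) z := by
  simpa using (((hasDerivAt_id z).const_mul a).add_const b).clog h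

lemma partial_fractions_eq_sq_div {K : Type*} [Field K] {κ η q m ψ S z : K}
    (hS : S ^ 2 = κ * η) (hm : m * (κ - 1) = κ + η - 2 * S) (hψ : ψ * (S - 1) = q * (κ - S))
    (hκ : κ - 1 ≠ 0) (hz : z ≠ 0) (hzκ : z + q * κ ≠ 0) (hzq : z + q ≠ 0) :
    η / (z + q * κ) - 1 / (z + q) + m / z
      = (S - 1) ^ 2 / (κ - 1) * (z - ψ) ^ 2 / (z * (z + q * κ) * (z + q)) := by
  have hsq : (S - 1) * (z - ψ) = (S - 1) * z - q * (κ - S) := by linear_combination -hψ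
  field_simp
  linear_combination (z + q * κ) * (z + q) * hm
    - ((S - 1) * (z - ψ) + (S - 1) * z - q * (κ - S)) * hsq - (z + q) ^ 2 * hS

lemma Real.sqrt_sub_sqrt_sq {a b : ℝ} (ha : 0 ≤ a) (hb : 0 ≤ b) :
    (√a - √b) ^ 2 = a + b - 2 * √(a * b) := by
  rw [sub_sq, Real.sq_sqrt ha, Real.sq_sqrt hb, Real.sqrt_mul ha]
  ring

theorem stmt_2_general (q κ η : ℝ) (hκ : 1 < κ) (hη : 0 < η)
    (hκη : κ * η ≠ 1)
    (m ψ : ℝ) (hm : m = (Real.sqrt κ - Real.sqrt η) ^ 2 / (κ - 1))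
    (hψ : ψ = q * (κ - Real.sqrt (κ * η)) / (Real.sqrt (κ * η) - 1))
    (G : ℂ → ℂ)
    (hG : G = fun z => (η : ℂ) * Complex.log ((κ : ℂ)⁻¹ * z + q)
      - Complex.log (z + q) + (m : ℂ) * Complex.log z)
    (z : ℂ) (hz : z ∈ Complex.slitPlane) (hzq : z + q ∈ Complex.slitPlane)
    (hzκq : (κ : ℂ)⁻¹ * z + q ∈ Complex.slitPlane) :
    HasDerivAt G
      ((((Real.sqrt (κ * η) : ℂ) - 1) ^ 2 / ((κ : ℂ) - 1)) * (z - ψ) ^ 2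
        / (z * (z + q * κ) * (z + q))) z := by
  have hκ0 : 0 < κ := one_pos.trans hκ
  set S := Real.sqrt (κ * η)
  have hS : S ^ 2 = κ * η := Real.sq_sqrt (mul_pos hκ0 hη).le
  have hS1 : S - 1 ≠ 0 := sub_ne_zero.mpr fun h => hκη (by rw [← hS, h]; norm_num)
  have hmS : m * (κ - 1) = κ + η - 2 * S := by
    rw [hm, div_mul_cancel₀ _ (by linarith), Real.sqrt_sub_sqrt_sq hκ0.le hη.le]
  have hψS : ψ * (S - 1) = q * (κ - S) := by rw [hψ, div_mul_cancel₀ _ hS1]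
  have hκC : (κ : ℂ) ≠ 0 := by exact_mod_cast hκ0.ne'
  have hzκ : z + q * κ ≠ 0 := by
    have := slitPlane_ne_zero hzκq
    contrapose! this
    field_simp
    linear_combination this
  have hG' : HasDerivAt G (η * ((κ : ℂ)⁻¹ / ((κ : ℂ)⁻¹ * z + q)) - 1 / (z + q) + m * z⁻¹) z := by
    subst hG
    exact (((hasDerivAt_log_affine hzκq).const_mul (η : ℂ)).sub
      (((hasDerivAt_id z).add_const (q : ℂ)).clog hzq)).add ((hasDerivAt_log hz).const_mul (m : ℂ))
  convert hG' using 1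
  rw [← partial_fractions_eq_sq_div (η := (η : ℂ)) (m := (m : ℂ)) (by exact_mod_cast hS)
    (by exact_mod_cast hmS) (by exact_mod_cast hψS) (by exact_mod_cast sub_ne_zero.mpr hκ.ne')
    (slitPlane_ne_zero hz) hzκ (slitPlane_ne_zero hzq)]
  field_simp

/-- The derivative of the stochastic six-vertex saddle-point function `G_V` in the
Tracy–Widom regime. -/
theorem stmt_2 (q κ η : ℝ) (hq : q ∈ Set.Ioo (0:ℝ) 1) (hκ : 1 < κ) (hη : 0 < η)
    (hκη : κ * η ≠ 1)
    (m ψ : ℝ) (hm : m = (Real.sqrt κ - Real.sqrt η) ^ 2 / (κ - 1))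
    (hψ : ψ = q * (κ - Real.sqrt (κ * η)) / (Real.sqrt (κ * η) - 1))
    (G : ℂ → ℂ)
    (hG : G = fun z => (η : ℂ) * Complex.log ((κ : ℂ)⁻¹ * z + q)
      - Complex.log (z + q) + (m : ℂ) * Complex.log z)
    (z : ℂ) (hz : z ∈ Complex.slitPlane) (hzq : z + q ∈ Complex.slitPlane)
    (hzκq : (κ : ℂ)⁻¹ * z + q ∈ Complex.slitPlane) :
    HasDerivAt G
      ((((Real.sqrt (κ * η) : ℂ) - 1) ^ 2 / ((κ : ℂ) - 1)) * (z - ψ) ^ 2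
        / (z * (z + q * κ) * (z + q))) z :=
  stmt_2_general q κ η hκ hη hκη m ψ hm hψ G hG z hz hzq hzκq
end

section
/- The second complex derivative of G_A at ψ_A equals 0, and the third complex derivative of G_A at ψ_A equals (1+η)^5/(8·q³·(1−η)), which moreover equals 2·(f_η/ψ_A)³. -/
/-! For `n ≥ 1` the `n`-th derivatives of `a / (z + c)`, `log (z + c)` and `log z` are explicit
Laurent monomials, so `G''` and `G'''` at `ψ` are rational expressions in `q, η, ψ`. Since
`ψ + q = 2q / (1 + η)`, both values reduce to identities of rational functions of `q` and `η`. -/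

open Complex
open scoped Nat

theorem iteratedDeriv_div_add_const (n : ℕ) (a c z : ℂ) :
    iteratedDeriv n (fun w => a / (w + c)) z = a * ((-1) ^ n * n ! * (z + c) ^ (-1 - n : ℤ)) := by
  simp only [div_eq_mul_inv]
  rw [iteratedDeriv_const_mul_field, iteratedDeriv_comp_add_const n Inv.inv c,
    iteratedDeriv_eq_iterate]
  exact congrArg (a * ·) (iter_deriv_inv n (z + c))

theorem iteratedDeriv_succ_log_add_const (n : ℕ) {c z : ℂ} (hz : z + c ∈ slitPlane) :
    iteratedDeriv (n + 1) (fun w => log (w + c)) z = (-1) ^ n * n ! * (z + c) ^ (-n - 1 : ℤ) := by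
  rw [iteratedDeriv_comp_add_const (n + 1) log c]
  exact iteratedDeriv_succ_log hz

theorem iteratedDeriv_succ_div_add_log (n : ℕ) (a b c m : ℂ) {z : ℂ} (hz : z ∈ slitPlane)
    (hzc : z + c ∈ slitPlane) :
    iteratedDeriv (n + 1) (fun w => a / (w + c) + b * log (w + c) + m * log w) z =
      (-1) ^ n * n ! * (-(n + 1) * a * (z + c) ^ (-n - 2 : ℤ) + b * (z + c) ^ (-n - 1 : ℤ)
        + m * z ^ (-n - 1 : ℤ)) := by
  have hzc0 : z + c ≠ 0 := slitPlane_ne_zero hzc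
  have h1 : ContDiffAt ℂ (n + 1) (fun w => a / (w + c)) z := by fun_prop (disch := assumption)
  have h2 : ContDiffAt ℂ (n + 1) (fun w => b * log (w + c)) z :=
    contDiffAt_const.mul ((contDiffAt_log hzc).comp z (contDiffAt_id.add contDiffAt_const))
  have h3 : ContDiffAt ℂ (n + 1) (fun w => m * log w) z := contDiffAt_const.mul (contDiffAt_log hz)
  rw [iteratedDeriv_fun_add (h1.add h2) h3, iteratedDeriv_fun_add h1 h2,
    iteratedDeriv_const_mul_field, iteratedDeriv_const_mul_field, iteratedDeriv_div_add_const,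
    iteratedDeriv_succ_log_add_const n hzc, iteratedDeriv_succ_log hz]
  push_cast [Nat.factorial_succ]
  ring_nf

theorem rpow_two_thirds_pow_three {x : ℝ} (hx : 0 ≤ x) : (x ^ ((2 : ℝ) / 3)) ^ 3 = x ^ 2 := by
  rw [← Real.rpow_natCast, ← Real.rpow_mul hx]
  norm_num

/-- The second derivative of `G_A` vanishes at the critical point `ψ_A`, and the
third derivative equals `(1+η)^5 / (8 q^3 (1-η)) = 2 (f_η / ψ_A)^3`. -/
theorem stmt_3 (q η : ℝ) (hq : q ∈ Set.Ioo (0:ℝ) 1) (hη : η ∈ Set.Ioo (-1:ℝ) 1)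
    (m f ψ : ℝ) (hm : m = ((1 - η) / 2) ^ 2)
    (hf : f = ((1 - η ^ 2) / 4) ^ ((2 : ℝ) / 3))
    (hψ : ψ = q * (1 - η) / (1 + η))
    (G : ℂ → ℂ)
    (hG : G = fun z => (q : ℂ) / (z + q) + (η : ℂ) * Complex.log (z + q)
      + (m : ℂ) * Complex.log z) :
    iteratedDeriv 2 G (ψ : ℂ) = 0 ∧
    iteratedDeriv 3 G (ψ : ℂ) = (((1 + η) ^ 5 / (8 * q ^ 3 * (1 - η)) : ℝ) : ℂ) ∧
    (1 + η) ^ 5 / (8 * q ^ 3 * (1 - η)) = 2 * (f / ψ) ^ 3 := by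
  obtain ⟨hq0, -⟩ := hq
  obtain ⟨hη1, hη2⟩ := hη
  have h1p : (1 + η : ℂ) ≠ 0 := by exact_mod_cast (by linarith : 1 + η ≠ 0)
  have h1m : (1 - η : ℂ) ≠ 0 := by exact_mod_cast (by linarith : 1 - η ≠ 0)
  have hq0' : (q : ℂ) ≠ 0 := by exact_mod_cast hq0.ne'
  have hψ0 : 0 < ψ := by rw [hψ]; exact div_pos (mul_pos hq0 (by linarith)) (by linarith)
  have hψC : (ψ : ℂ) = q * (1 - η) / (1 + η) := by rw [hψ]; push_cast; rfl
  have hψqC : (ψ : ℂ) + q = 2 * q / (1 + η) := by rw [hψC]; field_simp; ring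
  have hslit : (ψ : ℂ) ∈ slitPlane := ofReal_mem_slitPlane.2 hψ0
  have hslit' : (ψ : ℂ) + q ∈ slitPlane := by exact_mod_cast ofReal_mem_slitPlane.2 (by linarith)
  subst hG hm
  refine ⟨?_, ?_, ?_⟩
  · rw [iteratedDeriv_succ_div_add_log 1 _ _ _ _ hslit hslit', hψqC, hψC]
    push_cast
    field_simp
    ring
  · rw [iteratedDeriv_succ_div_add_log 2 _ _ _ _ hslit hslit', hψqC, hψC]
    push_cast
    field_simp
    ring
  · rw [hf, div_pow, rpow_two_thirds_pow_three (by nlinarith), hψ]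
    field_simp
    ring
end

section
/- The function z ↦ G_A(z) − G_A(ψ_A) − (1/3)·(f_η·(z − ψ_A)/ψ_A)³ is O(|z − ψ_A|⁴) as z → ψ_A; that is, there exist a constant C > 0 and a neighborhood of ψ_A on which |G_A(z) − G_A(ψ_A) − (1/3)(f_η(z − ψ_A)/ψ_A)³| ≤ C·|z − ψ_A|⁴. -/
/-!
`G_A'(z) = ((1+η)/2)² (z - ψ_A)² / (z (z+q)²)`, so `ψ_A` is a double critical point. Writing
`G_A'(z) = (z - ψ)² h(z)` with `h` holomorphic at `ψ`, the remainder
`R(z) = G_A(z) - G_A(ψ) - h(ψ) (z - ψ)³ / 3` has `R'(z) = (z - ψ)² (h(z) - h(ψ)) = O(|z - ψ|³)`,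
and the mean value inequality on small discs around `ψ` gives `R(z) = O(|z - ψ|⁴)`.
Finally `h(ψ) = (f_η / ψ)³` because `ψ / (ψ + q) = (1 - η) / 2`.
-/

open Complex Filter Topology Asymptotics

section TaylorRemainder

variable {𝕜 E : Type*} [RCLike 𝕜] [NormedAddCommGroup E] [NormedSpace 𝕜 E]

theorem isBigO_sub_pow_succ_of_hasDerivAt {g g' : 𝕜 → E} {x : 𝕜} {n : ℕ}
    (hg : ∀ᶠ w in 𝓝 x, HasDerivAt g (g' w) w) (hg' : g' =O[𝓝 x] fun w => (w - x) ^ n) :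
    (fun z => g z - g x) =O[𝓝 x] fun z => (z - x) ^ (n + 1) := by
  obtain ⟨C, hC, hCg'⟩ := hg'.exists_pos
  obtain ⟨r, hr, hball⟩ := Metric.eventually_nhds_iff_ball.1 (hg.and hCg'.bound)
  refine IsBigO.of_bound C (Filter.mem_of_superset (Metric.ball_mem_nhds x hr) fun z hz => ?_)
  have hsub : Metric.closedBall x ‖z - x‖ ⊆ Metric.ball x r :=
    Metric.closedBall_subset_ball (by simpa [dist_eq_norm] using hz)
  have hbound : ∀ w ∈ Metric.closedBall x ‖z - x‖, ‖g' w‖ ≤ C * ‖z - x‖ ^ n := fun w hw =>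
    calc ‖g' w‖ ≤ C * ‖(w - x) ^ n‖ := (hball w (hsub hw)).2
      _ ≤ C * ‖z - x‖ ^ n := by
        rw [norm_pow]
        gcongr
        simpa [dist_eq_norm] using hw
  have hmv := (convex_closedBall x ‖z - x‖).norm_image_sub_le_of_norm_hasDerivWithin_le
    (fun w hw => (hball w (hsub hw)).1.hasDerivWithinAt) hbound
    (Metric.mem_closedBall_self (norm_nonneg _)) (y := z) (by simp [dist_eq_norm])
  simpa [norm_pow, pow_succ, mul_assoc] using hmv

theorem isBigO_sub_sub_cube_of_hasDerivAt {g h : 𝕜 → 𝕜} {x : 𝕜}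
    (hg : ∀ᶠ w in 𝓝 x, HasDerivAt g ((w - x) ^ 2 * h w) w) (hh : DifferentiableAt 𝕜 h x) :
    (fun z => g z - g x - h x / 3 * (z - x) ^ 3) =O[𝓝 x] fun z => (z - x) ^ 4 := by
  have hR : ∀ᶠ w in 𝓝 x, HasDerivAt (fun z => g z - g x - h x / 3 * (z - x) ^ 3)
      ((w - x) ^ 2 * (h w - h x)) w := by
    filter_upwards [hg] with w hw
    have hcube : HasDerivAt (fun z => h x / 3 * (z - x) ^ 3) (h x * (w - x) ^ 2) w := by
      refine ((((hasDerivAt_id' w).sub_const x).fun_pow 3).const_mul (h x / 3)).congr_deriv ?_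
      push_cast
      ring
    exact ((hw.sub_const (g x)).sub hcube).congr_deriv (by ring)
  have hR' : (fun w => (w - x) ^ 2 * (h w - h x)) =O[𝓝 x] fun w => (w - x) ^ 3 :=
    ((isBigO_refl _ _).mul hh.hasDerivAt.isBigO_sub).congr_right fun w => (pow_succ _ 2).symm
  simpa using isBigO_sub_pow_succ_of_hasDerivAt hR hR'

end TaylorRemainder

section CriticalPoint

variable {q η : ℂ}

theorem hasDerivAt_G_A (hη : 1 + η ≠ 0) {z : ℂ} (hz : z ∈ slitPlane) (hzq : z + q ∈ slitPlane) :
    HasDerivAt (fun z => q / (z + q) + η * log (z + q) + ((1 - η) / 2) ^ 2 * log z)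
      ((z - q * (1 - η) / (1 + η)) ^ 2 * (((1 + η) / 2) ^ 2 / (z * (z + q) ^ 2))) z := by
  have hz0 : z ≠ 0 := slitPlane_ne_zero hz
  have hzq0 : z + q ≠ 0 := slitPlane_ne_zero hzq
  have hshift : HasDerivAt (fun z => z + q) 1 z := (hasDerivAt_id' z).add_const q
  have hG := ((hasDerivAt_const z q).div hshift hzq0).add
    (((hasDerivAt_log hzq).comp z hshift).const_mul η) |>.add
    ((hasDerivAt_log hz).const_mul (((1 - η) / 2) ^ 2))
  refine hG.congr_deriv ?_
  -- `-4qz + 4ηz(z+q) + (1-η)²(z+q)² = ((1+η)z - (1-η)q)²`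
  field_simp
  ring

theorem G_A_cubic_coeff (hq : q ≠ 0) (hη₁ : 1 - η ≠ 0) (hη₂ : 1 + η ≠ 0) :
    ((1 + η) / 2) ^ 2 / (q * (1 - η) / (1 + η) * (q * (1 - η) / (1 + η) + q) ^ 2)
      = ((1 - η ^ 2) / 4) ^ 2 / (q * (1 - η) / (1 + η)) ^ 3 := by
  have hψq : q * (1 - η) / (1 + η) + q = 2 * q / (1 + η) := by field_simp; ring
  rw [hψq]
  field_simp
  ring

end CriticalPoint

/-- The Taylor remainder of `G_A` at the critical point `ψ_A` beyond the cubic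
term is `O(|z − ψ_A|⁴)`. -/
theorem stmt_5 (q η : ℝ) (hq : q ∈ Set.Ioo (0:ℝ) 1) (hη : η ∈ Set.Ioo (-1:ℝ) 1)
    (m f ψ : ℝ) (hm : m = ((1 - η) / 2) ^ 2)
    (hf : f = ((1 - η ^ 2) / 4) ^ ((2 : ℝ) / 3))
    (hψ : ψ = q * (1 - η) / (1 + η))
    (G : ℂ → ℂ)
    (hG : G = fun z => (q : ℂ) / (z + q) + (η : ℂ) * Complex.log (z + q)
      + (m : ℂ) * Complex.log z) :
    ∃ C > (0 : ℝ), ∃ U ∈ nhds (ψ : ℂ), ∀ z ∈ U,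
      ‖G z - G (ψ : ℂ) - (1 / 3) * ((f : ℂ) * (z - ψ) / ψ) ^ 3‖
        ≤ C * ‖z - (ψ : ℂ)‖ ^ 4 := by
  obtain ⟨hq0, -⟩ := hq
  obtain ⟨hη₀, hη₁⟩ := hη
  have hψ0 : 0 < ψ := hψ ▸ div_pos (mul_pos hq0 (by linarith)) (by linarith)
  have hψc : (ψ : ℂ) = q * (1 - η) / (1 + η) := by rw [hψ]; push_cast; ring
  have hη₁c : (1 : ℂ) - η ≠ 0 := by exact_mod_cast (by linarith : (1 : ℝ) - η ≠ 0)
  have hη₂c : (1 : ℂ) + η ≠ 0 := by exact_mod_cast (by linarith : (1 : ℝ) + η ≠ 0)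
  have hf3 : (f : ℂ) ^ 3 = ((1 - η ^ 2) / 4) ^ 2 := by
    have : f ^ 3 = ((1 - η ^ 2) / 4) ^ 2 := by
      rw [hf, ← Real.rpow_natCast, ← Real.rpow_mul (by nlinarith)]
      norm_num
    exact_mod_cast this
  have hderiv : ∀ᶠ w in 𝓝 (ψ : ℂ),
      HasDerivAt G ((w - ψ) ^ 2 * (((1 + η) / 2) ^ 2 / (w * (w + q) ^ 2))) w := by
    filter_upwards [isOpen_slitPlane.mem_nhds (ofReal_mem_slitPlane.2 hψ0),
      (isOpen_slitPlane.preimage (continuous_add_const (q : ℂ))).mem_nhds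
        (by simpa using ofReal_mem_slitPlane.2 (add_pos hψ0 hq0))] with w hw hwq
    rw [hG, hm, hψc]
    push_cast
    exact hasDerivAt_G_A hη₂c hw hwq
  have hψq : (ψ : ℂ) * (ψ + q) ^ 2 ≠ 0 := by exact_mod_cast (by positivity : ψ * (ψ + q) ^ 2 ≠ 0)
  have hh : DifferentiableAt ℂ (fun w : ℂ => ((1 + η) / 2) ^ 2 / (w * (w + q) ^ 2)) ψ :=
    (differentiableAt_const _).div (by fun_prop) hψq
  have hcoeff : ((1 + η) / 2) ^ 2 / (ψ * (ψ + q) ^ 2) = (f : ℂ) ^ 3 / ψ ^ 3 := by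
    rw [hf3, hψc]
    exact G_A_cubic_coeff (by exact_mod_cast hq0.ne') hη₁c hη₂c
  obtain ⟨C, hC, hCb⟩ := (isBigO_sub_sub_cube_of_hasDerivAt hderiv hh).exists_pos
  refine ⟨C, hC, _, hCb.bound, fun z hz => ?_⟩
  have hz' : ‖G z - G ψ - (f : ℂ) ^ 3 / ψ ^ 3 / 3 * (z - ψ) ^ 3‖ ≤ C * ‖z - ψ‖ ^ 4 := by
    simpa only [hcoeff, norm_pow, Set.mem_ofPred_eq] using hz
  rwa [show (1 / 3 : ℂ) * (f * (z - ψ) / ψ) ^ 3 = f ^ 3 / ψ ^ 3 / 3 * (z - ψ) ^ 3 by ring]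
end

section
/- The set {z ∈ ℂ : H_A(z) = H_A(ψ_A)} is bounded. -/
/-!
Since `η + m_η = ((1 + η) / 2) ^ 2 > 0`, the function `H_A` grows like `(η + m_η) log |z|` at
infinity: `q / (z + q)` tends to `0` and `log |z + q| - log |z|` tends to `0`. Hence `H_A` tends
to `+∞` along the cobounded filter, and each of its level sets is bounded.
-/

open Complex Filter Topology Bornology

theorem isBounded_setOf_le_of_tendsto_cobounded_atTop {α β : Type*} [Bornology α] [Preorder β]
    [NoMaxOrder β] {f : α → β} (hf : Tendsto f (cobounded α) atTop) (K : β) :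
    IsBounded {x | f x ≤ K} :=
  isBounded_def.2 <| (hf.eventually_gt_atTop K).mono fun _ hx => hx.not_ge

section NormedField

variable {𝕜 : Type*} [NormedField 𝕜]

theorem tendsto_div_add_const_cobounded (a b : 𝕜) :
    Tendsto (fun z : 𝕜 => a / (z + b)) (cobounded 𝕜) (𝓝 0) := by
  simpa only [div_eq_mul_inv, mul_zero, Function.comp_def] using
    (tendsto_inv₀_cobounded.comp (tendsto_add_const_cobounded b)).const_mul a

theorem tendsto_log_norm_add_const_sub_log_norm_cobounded (a : 𝕜) :
    Tendsto (fun z : 𝕜 => Real.log ‖z + a‖ - Real.log ‖z‖) (cobounded 𝕜) (𝓝 0) := by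
  have h_one : Tendsto (fun z : 𝕜 => 1 + a * z⁻¹) (cobounded 𝕜) (𝓝 1) := by
    simpa using (tendsto_inv₀_cobounded.const_mul a).const_add 1
  have h_log : Tendsto (fun z : 𝕜 => Real.log ‖1 + a * z⁻¹‖) (cobounded 𝕜) (𝓝 0) := by
    simpa [Function.comp_def] using (Real.continuousAt_log (by simp)).tendsto.comp h_one.norm
  refine h_log.congr' ?_
  filter_upwards [eventually_ne_cobounded 0,
    (tendsto_add_const_cobounded a).eventually_ne_cobounded 0] with z hz hza
  rw [← Real.log_div (norm_ne_zero_iff.2 hza) (norm_ne_zero_iff.2 hz), ← norm_div, add_div,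
    div_self hz, div_eq_mul_inv]

end NormedField

theorem tendsto_re_div_add_log_norm_cobounded_atTop (q : ℂ) (η m : ℝ) (hηm : 0 < η + m) :
    Tendsto (fun z : ℂ => (q / (z + q)).re + η * Real.log ‖z + q‖ + m * Real.log ‖z‖)
      (cobounded ℂ) atTop := by
  have h_bdd : Tendsto (fun z : ℂ => (q / (z + q)).re +
      η * (Real.log ‖z + q‖ - Real.log ‖z‖)) (cobounded ℂ) (𝓝 0) := by
    simpa using ((continuous_re.tendsto 0).comp (tendsto_div_add_const_cobounded q q)).add
      ((tendsto_log_norm_add_const_sub_log_norm_cobounded q).const_mul η)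
  have h_log : Tendsto (fun z : ℂ => (η + m) * Real.log ‖z‖) (cobounded ℂ) atTop :=
    (Real.tendsto_log_atTop.comp tendsto_norm_cobounded_atTop).const_mul_atTop hηm
  exact (h_bdd.add_atTop h_log).congr fun z => by ring

theorem stmt_6_general (q η : ℝ) (hη : η ∈ Set.Ioo (-1:ℝ) 1)
    (m ψ : ℝ) (hm : m = ((1 - η) / 2) ^ 2)
    (H : ℂ → ℝ)
    (hH : H = fun z => ((q : ℂ) / (z + q)).re + η * Real.log ‖z + q‖
      + m * Real.log ‖z‖) :
    Bornology.IsBounded {z : ℂ | H z = H (ψ : ℂ)} := by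
  have hηm : 0 < η + m := by
    rw [hm]
    nlinarith [hη.1]
  subst hH
  exact (isBounded_setOf_le_of_tendsto_cobounded_atTop
    (tendsto_re_div_add_log_norm_cobounded_atTop q η m hηm) _).subset fun _ hz => hz.le

/-- The level set `{Re G_A = G_A(ψ_A)}` is bounded. -/
theorem stmt_6 (q η : ℝ) (hq : q ∈ Set.Ioo (0:ℝ) 1) (hη : η ∈ Set.Ioo (-1:ℝ) 1)
    (m ψ : ℝ) (hm : m = ((1 - η) / 2) ^ 2) (hψ : ψ = q * (1 - η) / (1 + η))
    (H : ℂ → ℝ)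
    (hH : H = fun z => ((q : ℂ) / (z + q)).re + η * Real.log ‖z + q‖
      + m * Real.log ‖z‖) :
    Bornology.IsBounded {z : ℂ | H z = H (ψ : ℂ)} :=
  stmt_6_general q η hη m ψ hm H hH
end

section
/- Let z₀ ∈ ℂ with Im z₀ ≠ 0. Then the set {ω ∈ ℝ : ω ≠ 0 and H_A(ω·z₀) = H_A(ψ_A)} is finite and has at most 6 elements. -/
/-!
Let `h(ω) = H_A(ω z₀)`. For `ω ≠ 0` the point `ω z₀` stays off the real axis, `h` is
differentiable there, and `h'(ω) = p(ω) / (ω |ω z₀ + q|⁴)` for a real quartic `p` with leading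
coefficient `(m + η)|z₀|⁴ = ((1 + η)/2)² |z₀|⁴ ≠ 0`. By Rolle's theorem, on each of the
half-lines `ω < 0` and `ω > 0` two consecutive solutions of `h(ω) = c` enclose a root of `p`,
so the level set has at most `(#roots of p) + 2 ≤ 6` points.
-/

open Complex Polynomial

theorem Set.encard_le_card_add_one_of_forall_exists_mem_Ioo {α : Type*} [LinearOrder α]
    {S : Set α} (T : Finset α) (h : ∀ x ∈ S, ∀ y ∈ S, x < y → ∃ z ∈ T, z ∈ Set.Ioo x y) :
    S.encard ≤ T.card + 1 := by
  classical
  have hmono : StrictMonoOn (fun x => (T.filter (· < x)).card) S := by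
    intro x hx y hy hxy
    obtain ⟨z, hzT, hxz, hzy⟩ := h x hx y hy hxy
    refine Finset.card_lt_card (Finset.ssubset_iff_of_subset ?_ |>.2 ⟨z, ?_, ?_⟩)
    · exact Finset.monotone_filter_right T fun w _ hw => hw.trans hxy
    · simp [hzT, hzy]
    · simp [hxz.le]
  have hmaps : Set.MapsTo (fun x => (T.filter (· < x)).card) S (Finset.range (T.card + 1)) :=
    fun x _ => by simpa [Nat.lt_succ_iff] using Finset.card_filter_le T _
  have := Set.encard_le_encard_of_injOn hmaps hmono.injOn
  rwa [Set.encard_coe_eq_coe_finsetCard, Finset.card_range, Nat.cast_add, Nat.cast_one] at this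

theorem encard_level_le_of_hasDerivAt_of_ordConnected {f f' : ℝ → ℝ} {U : Set ℝ}
    (hU : U.OrdConnected) (hf : ∀ x ∈ U, HasDerivAt f (f' x) x) (T : Finset ℝ)
    (hT : ∀ x ∈ U, f' x = 0 → x ∈ T) (c : ℝ) :
    {x ∈ U | f x = c}.encard ≤ T.card + 1 := by
  refine Set.encard_le_card_add_one_of_forall_exists_mem_Ioo T fun x hx y hy hxy => ?_
  have hIcc : Set.Icc x y ⊆ U := hU.out hx.1 hy.1
  have hcont : ContinuousOn f (Set.Icc x y) := fun w hw =>
    (hf w (hIcc hw)).continuousAt.continuousWithinAt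
  obtain ⟨z, hz, hf'z⟩ := exists_hasDerivAt_eq_zero hxy hcont (hx.2.trans hy.2.symm)
    fun w hw => hf w (hIcc (Set.Ioo_subset_Icc_self hw))
  exact ⟨z, hT z (hIcc (Set.Ioo_subset_Icc_self hz)) hf'z, hz⟩

theorem encard_level_le_of_hasDerivAt_of_ne {f f' : ℝ → ℝ} {a : ℝ}
    (hf : ∀ x ≠ a, HasDerivAt f (f' x) x) (T : Finset ℝ) (hT : ∀ x ≠ a, f' x = 0 → x ∈ T)
    (c : ℝ) : {x | x ≠ a ∧ f x = c}.encard ≤ T.card + 2 := by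
  classical
  have hsplit :
      {x | x ≠ a ∧ f x = c} = {x ∈ Set.Iio a | f x = c} ∪ {x ∈ Set.Ioi a | f x = c} := by
    ext x
    show x ≠ a ∧ f x = c ↔ (x < a ∧ f x = c) ∨ (a < x ∧ f x = c)
    rw [ne_iff_lt_or_gt, or_and_right]
  have hlt := encard_level_le_of_hasDerivAt_of_ordConnected Set.ordConnected_Iio
    (fun x hx => hf x hx.ne) (T.filter (· < a))
    (fun x hx h' => Finset.mem_filter.2 ⟨hT x hx.ne h', hx⟩) c
  have hgt := encard_level_le_of_hasDerivAt_of_ordConnected Set.ordConnected_Ioi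
    (fun x hx => hf x hx.ne') (T.filter (a < ·))
    (fun x hx h' => Finset.mem_filter.2 ⟨hT x hx.ne' h', hx⟩) c
  have hcard : (T.filter (· < a)).card + (T.filter (a < ·)).card ≤ T.card := by
    rw [← Finset.card_union_of_disjoint (Finset.disjoint_filter.2 fun x _ h₁ h₂ => lt_asymm h₁ h₂)]
    exact Finset.card_le_card
      (Finset.union_subset (Finset.filter_subset _ _) (Finset.filter_subset _ _))
  rw [hsplit]
  calc _ ≤ _ := Set.encard_union_le _ _
    _ ≤ ((T.filter (· < a)).card + 1 : ℕ∞) + ((T.filter (a < ·)).card + 1) := add_le_add hlt hgt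
    _ ≤ T.card + 2 := by norm_cast; omega

/-- `H_A`, with `m_η` replaced by a free parameter `m`. -/
noncomputable def asepPotential (q η m : ℝ) (z : ℂ) : ℝ :=
  ((q : ℂ) / (z + q)).re + η * Real.log ‖z + q‖ + m * Real.log ‖z‖

/-- `criticalQuartic q η m z` evaluated at `ω` is `Re (N(ω z) · conj (ω z + q)²)`, where
`N(w) = (m + η) w² + (2m + η - 1) q w + m q²` is the numerator of
`G_A'(w) = N(w) / (w (w + q)²)`. -/
noncomputable def criticalQuartic (q η m : ℝ) (z : ℂ) : ℝ[X] :=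
  C (m * q ^ 4) + C (q ^ 3 * z.re * (4 * m + η - 1)) * X
    + C (q ^ 2 * ((2 * m + η) * (z.im ^ 2 + 3 * z.re ^ 2) - 2 * normSq z)) * X ^ 2
    + C (q * z.re * normSq z * (4 * m + 3 * η - 1)) * X ^ 3
    + C ((m + η) * normSq z ^ 2) * X ^ 4

section
variable (q η m : ℝ) (z : ℂ)

theorem natDegree_criticalQuartic_le : (criticalQuartic q η m z).natDegree ≤ 4 := by
  unfold criticalQuartic
  compute_degree

variable {q η m z}

theorem criticalQuartic_ne_zero (hmη : m + η ≠ 0) (hz : z ≠ 0) :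
    criticalQuartic q η m z ≠ 0 := by
  have h4 : (criticalQuartic q η m z).coeff 4 = (m + η) * normSq z ^ 2 := by
    simp only [criticalQuartic, coeff_add, coeff_C_mul, coeff_X_pow, coeff_C, coeff_X]
    norm_num
  intro h0
  rw [h0, coeff_zero] at h4
  exact mul_ne_zero hmη (pow_ne_zero 2 (normSq_pos.2 hz).ne') h4.symm

theorem asepPotential_ofReal_mul (ω : ℝ) :
    asepPotential q η m (ω * z) = q * (ω * z.re + q) / ((ω * z.re + q) ^ 2 + (ω * z.im) ^ 2)
      + η / 2 * Real.log ((ω * z.re + q) ^ 2 + (ω * z.im) ^ 2)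
      + m / 2 * Real.log (ω ^ 2 * normSq z) := by
  have hre : ((ω : ℂ) * z + q).re = ω * z.re + q := by simp
  have hnormSq : normSq (ω * z + q) = (ω * z.re + q) ^ 2 + (ω * z.im) ^ 2 := by
    simp [normSq_apply]; ring
  rw [asepPotential, div_re, ofReal_re, ofReal_im, zero_mul, zero_div, add_zero, hre,
    norm_def, norm_def, Real.log_sqrt (normSq_nonneg _), Real.log_sqrt (normSq_nonneg _),
    hnormSq, normSq_mul, normSq_ofReal, ← sq]
  ring

theorem hasDerivAt_asepPotential_ofReal_mul (hz : z.im ≠ 0) {ω : ℝ} (hω : ω ≠ 0) :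
    HasDerivAt (fun ω : ℝ => asepPotential q η m (ω * z))
      ((criticalQuartic q η m z).eval ω / (ω * normSq (ω * z + q) ^ 2)) ω := by
  have hnormSq : normSq (ω * z + q) = (ω * z.re + q) ^ 2 + (ω * z.im) ^ 2 := by
    simp [normSq_apply]; ring
  have hA : (ω * z.re + q) ^ 2 + (ω * z.im) ^ 2 ≠ 0 := by positivity
  have hz0 : normSq z ≠ 0 := (normSq_pos.2 fun h0 => hz (by simp [h0])).ne'
  have hlin : HasDerivAt (fun t : ℝ => t * z.re + q) z.re ω :=
    (hasDerivAt_mul_const z.re).add_const q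
  have hA' := (hlin.fun_pow 2).add ((hasDerivAt_mul_const z.im).fun_pow 2)
  have hsq := (hasDerivAt_pow 2 ω).mul_const (normSq z)
  have := (((hlin.const_mul q).div hA' hA).add ((hA'.log hA).const_mul (η / 2))).add
    ((hsq.log (by positivity)).const_mul (m / 2))
  rw [show (fun t : ℝ => asepPotential q η m (t * z)) = _ from funext asepPotential_ofReal_mul]
  refine this.congr_deriv ?_
  rw [hnormSq]
  simp only [criticalQuartic, eval_add, eval_mul, eval_C, eval_X, eval_pow]
  rw [normSq_apply] at hz0 ⊢
  norm_num
  field_simp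
  ring
end

theorem stmt_8_general (q η : ℝ) (hη : η ∈ Set.Ioo (-1:ℝ) 1)
    (m ψ : ℝ) (hm : m = ((1 - η) / 2) ^ 2)
    (H : ℂ → ℝ)
    (hH : H = fun z => ((q : ℂ) / (z + q)).re + η * Real.log ‖z + q‖
      + m * Real.log ‖z‖)
    (z₀ : ℂ) (hz₀ : z₀.im ≠ 0) :
    {ω : ℝ | ω ≠ 0 ∧ H ((ω : ℂ) * z₀) = H (ψ : ℂ)}.Finite ∧
    {ω : ℝ | ω ≠ 0 ∧ H ((ω : ℂ) * z₀) = H (ψ : ℂ)}.ncard ≤ 6 := by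
  classical
  set p := criticalQuartic q η m z₀
  have hmη : m + η ≠ 0 := by
    rw [hm, show ((1 - η) / 2) ^ 2 + η = ((1 + η) / 2) ^ 2 by ring]
    exact pow_ne_zero 2 (by linarith [hη.1] : (0 : ℝ) < (1 + η) / 2).ne'
  have hp : p ≠ 0 := criticalQuartic_ne_zero hmη fun h => hz₀ (by simp [h])
  have hcrit :
      ∀ ω ≠ 0, p.eval ω / (ω * normSq (ω * z₀ + q) ^ 2) = 0 → ω ∈ p.roots.toFinset := by
    intro ω hω h0
    have him : ((ω : ℂ) * z₀ + q).im ≠ 0 := by simpa using mul_ne_zero hω hz₀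
    have hden : ω * normSq (ω * z₀ + q) ^ 2 ≠ 0 :=
      mul_ne_zero hω (pow_ne_zero 2 (normSq_pos.2 fun h => him (by rw [h]; rfl)).ne')
    rw [Multiset.mem_toFinset, mem_roots hp]
    exact (div_eq_zero_iff.1 h0).resolve_right hden
  have hroots : p.roots.toFinset.card ≤ 4 :=
    (Multiset.toFinset_card_le _).trans ((card_roots' p).trans (natDegree_criticalQuartic_le ..))
  subst hH
  rw [← Set.encard_le_coe_iff_finite_ncard_le]
  refine (encard_level_le_of_hasDerivAt_of_ne
    (fun ω hω => hasDerivAt_asepPotential_ofReal_mul hz₀ hω) _ hcrit _).trans ?_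
  norm_cast
  omega

/-- Any non-real line through the origin meets the level set
`{Re G_A = G_A(ψ_A)}` in at most six points. -/
theorem stmt_8 (q η : ℝ) (hq : q ∈ Set.Ioo (0:ℝ) 1) (hη : η ∈ Set.Ioo (-1:ℝ) 1)
    (m ψ : ℝ) (hm : m = ((1 - η) / 2) ^ 2) (hψ : ψ = q * (1 - η) / (1 + η))
    (H : ℂ → ℝ)
    (hH : H = fun z => ((q : ℂ) / (z + q)).re + η * Real.log ‖z + q‖
      + m * Real.log ‖z‖)
    (z₀ : ℂ) (hz₀ : z₀.im ≠ 0) :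
    {ω : ℝ | ω ≠ 0 ∧ H ((ω : ℂ) * z₀) = H (ψ : ℂ)}.Finite ∧
    {ω : ℝ | ω ≠ 0 ∧ H ((ω : ℂ) * z₀) = H (ψ : ℂ)}.ncard ≤ 6 :=
  stmt_8_general q η hη m ψ hm H hH z₀ hz₀
end

section
/- There exist real numbers z₁ ∈ (−q, 0) and z₂ ∈ (−∞, −q) such that the set {x ∈ ℝ : x ≠ 0, x ≠ −q, and H_A(x) = H_A(ψ_A)} consists of exactly the three distinct points z₂, z₁, and ψ_A. -/
/-!
On the real axis `H_A` is `f x = q / (x + q) + η log |x + q| + m_η log |x|`, whose derivative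
`((1 + η) x - (1 - η) q)² / (4 x (x + q)²)` has a double zero at `ψ_A` and no other zero. So `f`
strictly decreases on `(-∞, -q)` and on `(-q, 0)` and strictly increases on `(0, ∞)`. The limits
`+∞` at `-∞` and at `-q⁺`, and `-∞` at `-q⁻` and at `0⁻`, make `f` a bijection from each of the two
negative intervals onto `ℝ`; hence the value `f ψ_A` is taken exactly once on each of them, and
on `(0, ∞)` only at `ψ_A`.
-/

open Complex

open Filter Set Topology

-- `Real.log` of a negative number is the log of its absolute value, so this is `H_A` on `ℝ`.
noncomputable def phase (q η x : ℝ) : ℝ :=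
  q / (x + q) + η * Real.log (x + q) + ((1 - η) / 2) ^ 2 * Real.log x

lemma tendsto_const_add_mul_mul_log (q c : ℝ) :
    Tendsto (fun t : ℝ => q + c * (t * Real.log t)) (𝓝 0) (𝓝 q) := by
  simpa using (Real.continuous_mul_log.tendsto 0).const_mul c |>.const_add q

lemma div_add_mul_log_eventuallyEq (q c : ℝ) :
    (fun t : ℝ => q / t + c * Real.log t) =ᶠ[𝓝[≠] 0]
      fun t => (q + c * (t * Real.log t)) * t⁻¹ := by
  filter_upwards [self_mem_nhdsWithin] with t (ht : t ≠ 0)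
  field_simp

lemma tendsto_div_add_mul_log_nhdsGT_zero {q : ℝ} (hq : 0 < q) (c : ℝ) :
    Tendsto (fun t : ℝ => q / t + c * Real.log t) (𝓝[>] 0) atTop :=
  ((tendsto_const_add_mul_mul_log q c).mono_left nhdsWithin_le_nhds
    |>.pos_mul_atTop hq tendsto_inv_nhdsGT_zero).congr'
    ((div_add_mul_log_eventuallyEq q c).filter_mono (nhdsWithin_mono _ fun _ h => ne_of_gt h)).symm

lemma tendsto_div_add_mul_log_nhdsLT_zero {q : ℝ} (hq : 0 < q) (c : ℝ) :
    Tendsto (fun t : ℝ => q / t + c * Real.log t) (𝓝[<] 0) atBot :=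
  ((tendsto_const_add_mul_mul_log q c).mono_left nhdsWithin_le_nhds
    |>.pos_mul_atBot hq tendsto_inv_nhdsLT_zero).congr'
    ((div_add_mul_log_eventuallyEq q c).filter_mono (nhdsWithin_mono _ fun _ h => ne_of_lt h)).symm

lemma strictMonoOn_Ioi_of_deriv_pos_of_ne {f : ℝ → ℝ} {a c : ℝ} (hac : a < c)
    (hf : ContinuousOn f (Ioi a)) (hf' : ∀ x, a < x → x ≠ c → 0 < deriv f x) :
    StrictMonoOn f (Ioi a) := by
  rw [← Ioc_union_Ici_eq_Ioi hac]
  refine StrictMonoOn.union ?_ ?_ (isGreatest_Ioc hac) isLeast_Ici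
  · refine strictMonoOn_of_deriv_pos (convex_Ioc a c) (hf.mono Ioc_subset_Ioi_self) ?_
    rw [interior_Ioc]
    exact fun x hx => hf' x hx.1 hx.2.ne
  · refine strictMonoOn_of_deriv_pos (convex_Ici c) (hf.mono fun x hx => hac.trans_le hx) ?_
    rw [interior_Ici]
    exact fun x hx => hf' x (hac.trans hx) hx.ne'

lemma mul_one_sub_div_one_add_pos {q η : ℝ} (hq : 0 < q) (hη : η ∈ Ioo (-1) 1) :
    0 < q * (1 - η) / (1 + η) :=
  div_pos (mul_pos hq (by linarith [hη.2])) (by linarith [hη.1])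

namespace phase

variable {q η : ℝ}

lemma ofReal_eq (x : ℝ) :
    ((q : ℂ) / ((x : ℂ) + q)).re + η * Real.log ‖(x : ℂ) + q‖
      + ((1 - η) / 2) ^ 2 * Real.log ‖(x : ℂ)‖ = phase q η x := by
  rw [← ofReal_add, ← ofReal_div, ofReal_re, norm_real, norm_real, Real.norm_eq_abs,
    Real.norm_eq_abs, Real.log_abs, Real.log_abs, phase]

lemma hasDerivAt {x : ℝ} (hx : x ≠ 0) (hxq : x + q ≠ 0) :
    HasDerivAt (phase q η) (((1 + η) * x - (1 - η) * q) ^ 2 / (4 * x * (x + q) ^ 2)) x := by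
  have hshift : HasDerivAt (fun y : ℝ => y + q) 1 x := (hasDerivAt_id x).add_const q
  have h := (((hasDerivAt_const x q).div hshift hxq).add ((hshift.log hxq).const_mul η)).add
    ((Real.hasDerivAt_log hx).const_mul (((1 - η) / 2) ^ 2))
  refine h.congr_deriv ?_
  field_simp
  ring

lemma continuousAt {x : ℝ} (hx : x ≠ 0) (hxq : x + q ≠ 0) : ContinuousAt (phase q η) x :=
  (hasDerivAt hx hxq).continuousAt

lemma strictAntiOn (hq : 0 < q) (hη : η ∈ Ioo (-1) 1) {D : Set ℝ} (hD : Convex ℝ D)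
    (hDneg : ∀ x ∈ D, x < 0 ∧ x + q ≠ 0) : StrictAntiOn (phase q η) D := by
  refine strictAntiOn_of_deriv_neg hD
    (fun x hx => (continuousAt (hDneg x hx).1.ne (hDneg x hx).2).continuousWithinAt)
    fun x hx => ?_
  obtain ⟨hx, hxq⟩ := hDneg x (interior_subset hx)
  rw [(hasDerivAt hx.ne hxq).deriv]
  have hnum : (1 + η) * x - (1 - η) * q < 0 := by nlinarith [hη.1, hη.2]
  exact div_neg_of_pos_of_neg (pow_two_pos_of_ne_zero hnum.ne)
    (mul_neg_of_neg_of_pos (by linarith) (pow_two_pos_of_ne_zero hxq))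

lemma strictMonoOn_Ioi (hq : 0 < q) (hη : η ∈ Ioo (-1) 1) :
    StrictMonoOn (phase q η) (Ioi 0) := by
  refine strictMonoOn_Ioi_of_deriv_pos_of_ne (mul_one_sub_div_one_add_pos hq hη)
    (fun x (hx : 0 < x) => (continuousAt hx.ne' (by linarith)).continuousWithinAt)
    fun x hx hxψ => ?_
  rw [(hasDerivAt hx.ne' (by linarith)).deriv]
  have hnum : (1 + η) * x - (1 - η) * q ≠ 0 := by
    refine fun h => hxψ ?_
    rw [eq_div_iff (by linarith [hη.1])]
    linarith
  positivity

lemma tendsto_nhdsGT_neg (hq : 0 < q) : Tendsto (phase q η) (𝓝[>] (-q)) atTop := by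
  have hshift : Tendsto (· + q) (𝓝[>] (-q)) (𝓝[>] 0) := by
    rw [← neg_add_cancel q]
    exact map_add_right_nhdsGT.le
  have hlog := ((Real.continuousAt_log (neg_ne_zero.mpr hq.ne')).tendsto.const_mul
    (((1 - η) / 2) ^ 2)).mono_left (nhdsWithin_le_nhds (s := Ioi (-q)))
  exact ((tendsto_div_add_mul_log_nhdsGT_zero hq η).comp hshift).atTop_add hlog

lemma tendsto_nhdsLT_neg (hq : 0 < q) : Tendsto (phase q η) (𝓝[<] (-q)) atBot := by
  have hshift : Tendsto (· + q) (𝓝[<] (-q)) (𝓝[<] 0) := by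
    rw [← neg_add_cancel q]
    exact map_add_right_nhdsLT.le
  have hlog := ((Real.continuousAt_log (neg_ne_zero.mpr hq.ne')).tendsto.const_mul
    (((1 - η) / 2) ^ 2)).mono_left (nhdsWithin_le_nhds (s := Iio (-q)))
  exact ((tendsto_div_add_mul_log_nhdsLT_zero hq η).comp hshift).atBot_add hlog

lemma tendsto_nhdsLT_zero (hq : 0 < q) (hη : η < 1) : Tendsto (phase q η) (𝓝[<] 0) atBot := by
  have hq' : (0 : ℝ) + q ≠ 0 := by simpa using hq.ne'
  have hcont : ContinuousAt (fun x => q / (x + q) + η * Real.log (x + q)) 0 := by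
    fun_prop (disch := exact hq')
  exact (hcont.tendsto.mono_left nhdsWithin_le_nhds).add_atBot
    (Real.tendsto_log_nhdsLT_zero.const_mul_atBot (by positivity))

lemma tendsto_atBot (hη : -1 < η) : Tendsto (phase q η) atBot atTop := by
  have hfrac : Tendsto (fun x : ℝ => q / (x + q)) atBot (𝓝 0) :=
    tendsto_const_nhds.div_atBot (tendsto_atBot_add_const_right _ q tendsto_id)
  have hratio : Tendsto (fun x : ℝ => Real.log (-x + -q) - Real.log (-x)) atBot (𝓝 0) :=
    (Real.tendsto_log_comp_add_sub_log (-q)).comp tendsto_neg_atBot_atTop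
  have hlog : Tendsto (fun x : ℝ => ((1 + η) / 2) ^ 2 * Real.log (-x)) atBot atTop :=
    (Real.tendsto_log_atTop.comp tendsto_neg_atBot_atTop).const_mul_atTop (pow_pos (by linarith) 2)
  refine ((hfrac.add (hratio.const_mul η)).add_atTop hlog).congr fun x => ?_
  rw [phase, ← Real.log_neg_eq_log x, ← Real.log_neg_eq_log (x + q), neg_add]
  ring

lemma exists_mem_Ioo_eq (hq : 0 < q) (hη : η < 1) (c : ℝ) : ∃ z ∈ Ioo (-q) 0, phase q η z = c :=
  isPreconnected_Ioo.intermediate_value_Iii (le_principal_iff.mpr (Ioo_mem_nhdsLT (by linarith)))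
    (le_principal_iff.mpr (Ioo_mem_nhdsGT (by linarith)))
    (fun x hx => (continuousAt hx.2.ne (by linarith [hx.1])).continuousWithinAt)
    (tendsto_nhdsLT_zero hq hη) (tendsto_nhdsGT_neg hq) (mem_univ c)

lemma exists_mem_Iio_eq (hq : 0 < q) (hη : -1 < η) (c : ℝ) : ∃ z ∈ Iio (-q), phase q η z = c :=
  isPreconnected_Iio.intermediate_value_Iii (le_principal_iff.mpr self_mem_nhdsWithin)
    (le_principal_iff.mpr (Iio_mem_atBot _))
    (fun x (hx : x < -q) => (continuousAt (by linarith) (by linarith)).continuousWithinAt)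
    (tendsto_nhdsLT_neg hq) (tendsto_atBot hη) (mem_univ c)

end phase

/-- The real points of the level set `{Re G_A = G_A(ψ_A)}` (away from the
singularities `0` and `-q`) are exactly three: `z₂ < -q < z₁ < 0` and `ψ_A`. -/
theorem stmt_9 (q η : ℝ) (hq : q ∈ Set.Ioo (0:ℝ) 1) (hη : η ∈ Set.Ioo (-1:ℝ) 1)
    (m ψ : ℝ) (hm : m = ((1 - η) / 2) ^ 2) (hψ : ψ = q * (1 - η) / (1 + η))
    (H : ℂ → ℝ)
    (hH : H = fun z => ((q : ℂ) / (z + q)).re + η * Real.log ‖z + q‖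
      + m * Real.log ‖z‖) :
    ∃ z₁ ∈ Set.Ioo (-q) 0, ∃ z₂ ∈ Set.Iio (-q),
      {x : ℝ | x ≠ 0 ∧ x ≠ -q ∧ H (x : ℂ) = H (ψ : ℂ)} = {z₂, z₁, ψ} ∧
      z₂ ≠ z₁ ∧ z₂ ≠ ψ ∧ z₁ ≠ ψ := by
  subst hm hH
  have hq0 : 0 < q := hq.1
  have hψ0 : 0 < ψ := hψ ▸ mul_one_sub_div_one_add_pos hq0 hη
  obtain ⟨z₁, hz₁, hz₁ψ⟩ := phase.exists_mem_Ioo_eq hq0 hη.2 (phase q η ψ)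
  obtain ⟨z₂, hz₂ : z₂ < -q, hz₂ψ⟩ := phase.exists_mem_Iio_eq hq0 hη.1 (phase q η ψ)
  refine ⟨z₁, hz₁, z₂, hz₂, ?_, by linarith [hz₁.1], by linarith, by linarith [hz₁.2]⟩
  ext x
  simp only [phase.ofReal_eq, mem_ofPred_eq, mem_insert_iff, mem_singleton_iff]
  constructor
  · rintro ⟨hx0, hxq, hxψ⟩
    rcases lt_trichotomy x (-q) with hlt | rfl | hgt
    · exact .inl <| (phase.strictAntiOn hq0 hη (convex_Iio _) fun y (hy : y < -q) =>
        ⟨by linarith, by linarith⟩).injOn hlt hz₂ (hxψ.trans hz₂ψ.symm)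
    · exact absurd rfl hxq
    rcases hx0.lt_or_gt with hneg | hpos
    · exact .inr <| .inl <| (phase.strictAntiOn hq0 hη (convex_Ioo _ _) fun y hy =>
        ⟨hy.2, by linarith [hy.1]⟩).injOn ⟨hgt, hneg⟩ hz₁ (hxψ.trans hz₁ψ.symm)
    · exact .inr <| .inr <| (phase.strictMonoOn_Ioi hq0 hη).injOn hpos hψ0 hxψ
  · rintro (rfl | rfl | rfl)
    · exact ⟨by linarith, hz₂.ne, hz₂ψ⟩
    · exact ⟨hz₁.2.ne, hz₁.1.ne', hz₁ψ⟩
    · exact ⟨hψ0.ne', by linarith, rfl⟩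
end

section
/- Let z₀ ∈ ℂ with Im z₀ ≠ 0 and let ω ∈ ℝ with ω ≠ 0. Then the function t ↦ H_A(t·z₀) (from ℝ to ℝ) has derivative at ω equal to ((η+1)²/(4·ω·|ω + q·z₀^{−1}|⁴)) · Re( (ω − ψ_A·z₀^{−1})² · (ω + q·(conj z₀)^{−1})² ). -/
/-!
`H_A` is the real part of `G_A`, which is holomorphic off the real axis (there `log |z| = Re log z`),
so along the non-real line `t ↦ t z₀` the derivative of `H_A` is `Re (G_A'(ω z₀) z₀)`. The saddle-point
structure is the factorisation `G_A'(z) = ((η+1)²/4) (z - ψ_A)² / (z (z+q)²)`; dividing numerator and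
denominator by `z₀²` and rationalising `c = ω + q z₀⁻¹` gives the stated formula.
-/

open Complex ComplexConjugate

/-- `G_A`, with `m` in place of `m_η`. -/
noncomputable def asepG (q η m : ℝ) (z : ℂ) : ℂ :=
  q / (z + q) + η * log (z + q) + m * log z

lemma re_asepG (q η m : ℝ) (z : ℂ) :
    (asepG q η m z).re = ((q : ℂ) / (z + q)).re + η * Real.log ‖z + q‖ + m * Real.log ‖z‖ := by
  simp [asepG, log_re]

lemma hasDerivAt_asepG (q η m : ℝ) {z : ℂ} (hz : z ∈ slitPlane) (hzq : z + q ∈ slitPlane) :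
    HasDerivAt (asepG q η m) (-q / (z + q) ^ 2 + η / (z + q) + m / z) z := by
  have hshift : HasDerivAt (fun u : ℂ => u + q) 1 z := (hasDerivAt_id z).add_const _
  have hfrac : HasDerivAt (fun u : ℂ => q / (u + q)) ((0 * (z + q) - q * 1) / (z + q) ^ 2) z :=
    (hasDerivAt_const z (q : ℂ)).div hshift (slitPlane_ne_zero hzq)
  have hlogq : HasDerivAt (fun u : ℂ => log (u + q)) (1 / (z + q)) z := hshift.clog hzq
  refine ((hfrac.add (hlogq.const_mul (η : ℂ))).add
    ((Complex.hasDerivAt_log hz).const_mul (m : ℂ))).congr_deriv ?_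
  simp only [div_eq_mul_inv]
  ring

/-- The critical points of `G_A` merge into the double root `ψ_A`. -/
lemma asepG_deriv_eq {K : Type*} [Field K] [CharZero K] {q η z : K} (hη : 1 + η ≠ 0)
    (hz : z ≠ 0) (hzq : z + q ≠ 0) :
    -q / (z + q) ^ 2 + η / (z + q) + ((1 - η) / 2) ^ 2 / z
      = (η + 1) ^ 2 / 4 * (z - q * (1 - η) / (1 + η)) ^ 2 / (z * (z + q) ^ 2) := by
  field_simp
  ring

lemma Complex.re_div_sq (w c : ℂ) : (w / c ^ 2).re = (w * conj c ^ 2).re / ‖c‖ ^ 4 := by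
  rw [div_eq_mul_inv, ← inv_pow, inv_def, mul_pow, ← mul_assoc, ← ofReal_pow, re_mul_ofReal,
    normSq_eq_norm_sq, inv_pow, ← pow_mul, div_eq_mul_inv]

lemma re_asepG_deriv_mul_eq {q η ω : ℝ} {z₀ : ℂ} (hη : 1 + η ≠ 0) (hω : ω ≠ 0) (hz₀ : z₀ ≠ 0)
    (hq : (ω : ℂ) * z₀ + q ≠ 0) :
    ((-q / (ω * z₀ + q) ^ 2 + η / (ω * z₀ + q) + (((1 - η) / 2) ^ 2 : ℝ) / (ω * z₀)) * z₀).re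
      = (η + 1) ^ 2 / (4 * ω * ‖(ω : ℂ) + q * z₀⁻¹‖ ^ 4)
        * (((ω - (q * (1 - η) / (1 + η) : ℝ) * z₀⁻¹) ^ 2 * (ω + q * (conj z₀)⁻¹) ^ 2).re) := by
  have hηC : (1 : ℂ) + η ≠ 0 := by exact_mod_cast hη
  have hc : (ω : ℂ) + q * z₀⁻¹ ≠ 0 := by
    have : ((ω : ℂ) + q * z₀⁻¹) * z₀ = ω * z₀ + q := by field_simp
    exact left_ne_zero_of_mul (this ▸ hq)
  have hrescale : -q / (ω * z₀ + q) ^ 2 + η / (ω * z₀ + q) + ((1 - η) / 2) ^ 2 / (ω * z₀)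
      = (((η + 1) ^ 2 / (4 * ω) : ℝ) : ℂ)
        * ((ω - q * (1 - η) / (1 + η) * z₀⁻¹) ^ 2 / (ω + q * z₀⁻¹) ^ 2) * z₀⁻¹ := by
    rw [asepG_deriv_eq hηC (mul_ne_zero (ofReal_ne_zero.2 hω) hz₀) hq]
    push_cast
    field_simp
  have hconj : conj ((ω : ℂ) + q * z₀⁻¹) = ω + q * (conj z₀)⁻¹ := by simp
  push_cast
  rw [hrescale, inv_mul_cancel_right₀ hz₀, re_ofReal_mul, re_div_sq, hconj]
  ring

theorem stmt_10_general (q η : ℝ) (hη : η ∈ Set.Ioo (-1:ℝ) 1)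
    (m ψ : ℝ) (hm : m = ((1 - η) / 2) ^ 2) (hψ : ψ = q * (1 - η) / (1 + η))
    (H : ℂ → ℝ)
    (hH : H = fun z => ((q : ℂ) / (z + q)).re + η * Real.log ‖z + q‖
      + m * Real.log ‖z‖)
    (z₀ : ℂ) (hz₀ : z₀.im ≠ 0) (ω : ℝ) (hω : ω ≠ 0) :
    HasDerivAt (fun t : ℝ => H ((t : ℂ) * z₀))
      ((η + 1) ^ 2 / (4 * ω * ‖(ω : ℂ) + (q : ℂ) * z₀⁻¹‖ ^ 4) *
        ((((ω : ℂ) - (ψ : ℂ) * z₀⁻¹) ^ 2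
          * ((ω : ℂ) + (q : ℂ) * ((starRingEnd ℂ) z₀)⁻¹) ^ 2).re)) ω := by
  have him : ((ω : ℂ) * z₀).im ≠ 0 := by simpa using mul_ne_zero hω hz₀
  have hslit : (ω : ℂ) * z₀ ∈ slitPlane := mem_slitPlane_iff.2 (Or.inr him)
  have hslitq : (ω : ℂ) * z₀ + q ∈ slitPlane := mem_slitPlane_iff.2 (Or.inr (by simpa using him))
  have hline := ((hasDerivAt_asepG q η m hslit hslitq).comp (ω : ℂ)
    ((hasDerivAt_id (ω : ℂ)).mul_const z₀)).real_of_complex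
  subst hH hm hψ
  convert hline using 1
  · ext t
    simp [re_asepG]
  · simp only [one_mul]
    exact (re_asepG_deriv_mul_eq (by linarith [hη.1]) hω (fun h => hz₀ (by simp [h]))
      (slitPlane_ne_zero hslitq)).symm

/-- The derivative of `t ↦ H_A(t z₀)` along a non-real line through the origin. -/
theorem stmt_10 (q η : ℝ) (hq : q ∈ Set.Ioo (0:ℝ) 1) (hη : η ∈ Set.Ioo (-1:ℝ) 1)
    (m ψ : ℝ) (hm : m = ((1 - η) / 2) ^ 2) (hψ : ψ = q * (1 - η) / (1 + η))
    (H : ℂ → ℝ)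
    (hH : H = fun z => ((q : ℂ) / (z + q)).re + η * Real.log ‖z + q‖
      + m * Real.log ‖z‖)
    (z₀ : ℂ) (hz₀ : z₀.im ≠ 0) (ω : ℝ) (hω : ω ≠ 0) :
    HasDerivAt (fun t : ℝ => H ((t : ℂ) * z₀))
      ((η + 1) ^ 2 / (4 * ω * ‖(ω : ℂ) + (q : ℂ) * z₀⁻¹‖ ^ 4) *
        ((((ω : ℂ) - (ψ : ℂ) * z₀⁻¹) ^ 2
          * ((ω : ℂ) + (q : ℂ) * ((starRingEnd ℂ) z₀)⁻¹) ^ 2).re)) ω :=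
  stmt_10_general q η hη m ψ hm hψ H hH z₀ hz₀ ω hω
end

section
/- Fix q ∈ (0,1), β > 0, f > 0, an integer m ≥ 1, and real numbers p, r_1, …, r_m. Let ψ, β_1, …, β_m : (0,∞) → ℝ be functions such that T^{1/3}·(ψ(T) − qβ) → p and T^{1/3}·(β_k(T) − β) → r_k as T → ∞, for each k ∈ {1,…,m}. Set σ(T) = ψ(T)/(f·T^{1/3}) and c_k = f·p/(qβ) − f·r_k/β. Then for all fixed ŵ, v̂ ∈ ℂ with ŵ + c_k ≠ 0 for every k ∈ {1,…,m}, one has lim_{T→∞} ∏_{k=1}^m ( (q^{−1}·β_k(T)^{−1}·(ψ(T) + σ(T)·v̂) ; q)_∞ / (q^{−1}·β_k(T)^{−1}·(ψ(T) + σ(T)·ŵ) ; q)_∞ ) = ∏_{k=1}^m (v̂ + c_k)/(ŵ + c_k). -/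
open Filter Topology

/-- The infinite q-Pochhammer symbol `(a; q)_∞ = ∏_{n=0}^∞ (1 − a qⁿ)`. -/
noncomputable def qPochInf (a : ℂ) (q : ℝ) : ℂ := ∏' n : ℕ, (1 - a * (q : ℂ) ^ n)

/-!
Since `(a; q)_∞ = (1 - a) (aq; q)_∞` and `a ↦ (aq; q)_∞` is continuous and nonzero at `a = 1`,
a ratio `(a; q)_∞ / (b; q)_∞` with `a, b → 1` has the same limit as `(1 - a) / (1 - b)`.
At the critical scaling both arguments tend to `1`, and after multiplying by `T^{1/3} q β_k(T)`
the numerator and denominator of `(1 - a) / (1 - b)` become affine in `v̂`, resp. `ŵ`, with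
convergent coefficients; their limits are `-(qβ/f) (v̂ + c_k)` and `-(qβ/f) (ŵ + c_k)`.
-/

section QPochhammer

variable {q : ℝ}

lemma summable_norm_mul_pow (hq : |q| < 1) (a : ℂ) :
    Summable fun n : ℕ => ‖a * (q : ℂ) ^ n‖ := by
  simpa [norm_mul, norm_pow] using
    (summable_geometric_of_lt_one (abs_nonneg q) hq).mul_left ‖a‖

lemma multipliable_qPochInf (hq : |q| < 1) (a : ℂ) :
    Multipliable fun n : ℕ => 1 - a * (q : ℂ) ^ n := by
  simpa [sub_eq_add_neg] using
    multipliable_one_add_of_summable (f := fun n : ℕ => -(a * (q : ℂ) ^ n))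
      (by simpa using summable_norm_mul_pow hq a)

lemma qPochInf_eq_one_sub_mul (hq : |q| < 1) (a : ℂ) :
    qPochInf a q = (1 - a) * qPochInf (a * q) q := by
  have hshift : (fun n : ℕ => 1 - a * (q : ℂ) ^ (n + 1)) = fun n => 1 - a * q * (q : ℂ) ^ n := by
    ext n; ring
  rw [qPochInf, tprod_eq_zero_mul' (f := fun n : ℕ => 1 - a * (q : ℂ) ^ n)
    (hshift ▸ multipliable_qPochInf hq (a * q)), hshift, qPochInf, pow_zero, mul_one]

lemma qPochInf_ne_zero (hq : |q| < 1) {a : ℂ} (ha : ∀ n : ℕ, a * (q : ℂ) ^ n ≠ 1) :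
    qPochInf a q ≠ 0 := by
  simpa [qPochInf, sub_eq_add_neg] using
    tprod_one_add_ne_zero_of_summable (f := fun n : ℕ => -(a * (q : ℂ) ^ n))
      (fun n => by rw [← sub_eq_add_neg, sub_ne_zero]; exact (ha n).symm)
      (by simpa using summable_norm_mul_pow hq a)

lemma qPochInf_self_ne_zero (hq : |q| < 1) : qPochInf q q ≠ 0 := by
  refine qPochInf_ne_zero hq fun n h => ?_
  have : |q| ^ (n + 1) < 1 := pow_lt_one₀ (abs_nonneg q) hq n.succ_ne_zero
  rw [← pow_succ', ← Complex.ofReal_pow, ← Complex.ofReal_one, Complex.ofReal_inj] at h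
  rw [← abs_pow, h, abs_one] at this
  exact this.false

lemma continuous_qPochInf (hq : |q| < 1) : Continuous fun a : ℂ => qPochInf a q := by
  refine continuous_iff_continuousAt.2 fun a => ?_
  set R := ‖a‖ + 1
  have hprod := Summable.hasProdLocallyUniformlyOn_nat_one_add (K := Metric.ball (0 : ℂ) R)
    (f := fun n (z : ℂ) => -(z * (q : ℂ) ^ n)) Metric.isOpen_ball
    ((summable_geometric_of_lt_one (abs_nonneg q) hq).mul_left R)
    (Eventually.of_forall fun n z hz => by
      simp only [norm_neg, norm_mul, norm_pow, Complex.norm_real, Real.norm_eq_abs]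
      exact mul_le_mul_of_nonneg_right (mem_ball_zero_iff.1 hz).le (by positivity))
    (fun n => by fun_prop)
  have hcont : ContinuousOn (fun z : ℂ => qPochInf z q) (Metric.ball 0 R) := by
    simpa [qPochInf, sub_eq_add_neg] using
      hprod.tendstoLocallyUniformlyOn_finsetRange.continuousOn
        (Frequently.of_forall fun N => by fun_prop)
  exact hcont.continuousAt (Metric.isOpen_ball.mem_nhds (by simp [R]))

lemma tendsto_qPochInf_div_qPochInf (hq : |q| < 1) {α : Type*} {l : Filter α} {a b : α → ℂ}
    {L : ℂ} (ha : Tendsto a l (𝓝 1)) (hb : Tendsto b l (𝓝 1))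
    (hab : Tendsto (fun x => (1 - a x) / (1 - b x)) l (𝓝 L)) :
    Tendsto (fun x => qPochInf (a x) q / qPochInf (b x) q) l (𝓝 L) := by
  have htail : ∀ {c : α → ℂ}, Tendsto c l (𝓝 1) →
      Tendsto (fun x => qPochInf (c x * q) q) l (𝓝 (qPochInf q q)) := fun hc => by
    have := ((continuous_qPochInf hq).tendsto _).comp (hc.mul_const (q : ℂ))
    rwa [one_mul] at this
  have := hab.mul ((htail ha).div (htail hb) (qPochInf_self_ne_zero hq))
  rw [div_self (qPochInf_self_ne_zero hq), mul_one] at this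
  refine this.congr fun x => ?_
  rw [qPochInf_eq_one_sub_mul hq (a x), qPochInf_eq_one_sub_mul hq (b x), mul_div_mul_comm]
  rfl

end QPochhammer

lemma tendsto_of_tendsto_mul_sub {α : Type*} {l : Filter α} {t g : α → ℝ} {a L : ℝ}
    (ht : Tendsto t l atTop) (h : Tendsto (fun x => t x * (g x - a)) l (𝓝 L)) :
    Tendsto g l (𝓝 a) := by
  have := (h.mul (tendsto_inv_atTop_zero.comp ht)).const_add a
  rw [mul_zero, add_zero] at this
  refine this.congr' ?_
  filter_upwards [ht.eventually_gt_atTop 0] with x hx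
  simp only [Function.comp_apply]
  field_simp
  ring

noncomputable def criticalArg (q b ψ σ : ℝ) (z : ℂ) : ℂ := (q : ℂ)⁻¹ * (b : ℂ)⁻¹ * (ψ + σ * z)

lemma one_sub_criticalArg {q b t : ℝ} (hq : q ≠ 0) (hb : b ≠ 0) (ht : t ≠ 0) (ψ σ : ℝ) (z : ℂ) :
    1 - criticalArg q b ψ σ z =
      (((t * (q * b - ψ) : ℝ) : ℂ) - ((t * σ : ℝ) : ℂ) * z) / ((t * q * b : ℝ) : ℂ) := by
  have : (t : ℂ) ≠ 0 := by exact_mod_cast ht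
  have : (b : ℂ) ≠ 0 := by exact_mod_cast hb
  have : (q : ℂ) ≠ 0 := by exact_mod_cast hq
  rw [criticalArg]
  push_cast
  field_simp
  ring

section CriticalScaling

variable {α : Type*} {l : Filter α} {q β p r c : ℝ} {t ψ b σ : α → ℝ}

lemma tendsto_criticalArg (hq : q ≠ 0) (hβ : β ≠ 0) (hψ : Tendsto ψ l (𝓝 (q * β)))
    (hb : Tendsto b l (𝓝 β)) (hσ : Tendsto σ l (𝓝 0)) (z : ℂ) :
    Tendsto (fun x => criticalArg q (b x) (ψ x) (σ x) z) l (𝓝 1) := by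
  have hq' : (q : ℂ) ≠ 0 := by exact_mod_cast hq
  have hβ' : (β : ℂ) ≠ 0 := by exact_mod_cast hβ
  have := tendsto_const_nhds (x := (q : ℂ)⁻¹) |>.mul (hb.ofReal.inv₀ hβ')
    |>.mul (hψ.ofReal.add (hσ.ofReal.mul_const z))
  unfold criticalArg
  convert this using 2
  rw [Complex.ofReal_zero, zero_mul, add_zero, Complex.ofReal_mul]
  field_simp

lemma tendsto_one_sub_criticalArg_div {s : ℝ} (hq : q ≠ 0) (hβ : β ≠ 0) (hs : s ≠ 0)
    (ht : Tendsto t l atTop) (hψ : Tendsto (fun x => t x * (ψ x - q * β)) l (𝓝 p))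
    (hb : Tendsto (fun x => t x * (b x - β)) l (𝓝 r)) (hσ : Tendsto (fun x => t x * σ x) l (𝓝 s))
    (hc : c = (p - q * r) / s) {v w : ℂ} (hw : w + c ≠ 0) :
    Tendsto (fun x => (1 - criticalArg q (b x) (ψ x) (σ x) v) /
      (1 - criticalArg q (b x) (ψ x) (σ x) w)) l (𝓝 ((v + c) / (w + c))) := by
  set N : ℂ → α → ℂ := fun z x => ((t x * (q * b x - ψ x) : ℝ) : ℂ) - ((t x * σ x : ℝ) : ℂ) * z
  have hs' : ((-s : ℝ) : ℂ) ≠ 0 := by exact_mod_cast neg_ne_zero.2 hs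
  have hN : ∀ z, Tendsto (N z) l (𝓝 (((-s : ℝ) : ℂ) * (z + c))) := fun z => by
    have hgap : Tendsto (fun x => t x * (q * b x - ψ x)) l (𝓝 (q * r - p)) :=
      ((hb.const_mul q).sub hψ).congr fun x => by ring
    convert hgap.ofReal.sub (hσ.ofReal.mul_const z) using 2
    have : (s : ℂ) ≠ 0 := by exact_mod_cast hs
    rw [hc]
    push_cast
    field_simp
    ring
  have hN_div : ∀ᶠ x in l, N v x / N w x = (1 - criticalArg q (b x) (ψ x) (σ x) v) /
      (1 - criticalArg q (b x) (ψ x) (σ x) w) := by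
    filter_upwards [ht.eventually_gt_atTop 0,
      (tendsto_of_tendsto_mul_sub ht hb).eventually_ne hβ] with x htx hbx
    have hd : ((t x * q * b x : ℝ) : ℂ) ≠ 0 := by
      exact_mod_cast mul_ne_zero (mul_ne_zero htx.ne' hq) hbx
    rw [one_sub_criticalArg hq hbx htx.ne', one_sub_criticalArg hq hbx htx.ne',
      div_div_div_cancel_right₀ hd]
  have := (hN v).div (hN w) (mul_ne_zero hs' hw)
  rw [mul_div_mul_left _ _ hs'] at this
  exact this.congr' hN_div

lemma tendsto_qPochInf_criticalArg_div {f : ℝ} (hq1 : |q| < 1) (hq : q ≠ 0) (hβ : β ≠ 0)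
    (hf : f ≠ 0) (ht : Tendsto t l atTop) (hψ : Tendsto (fun x => t x * (ψ x - q * β)) l (𝓝 p))
    (hb : Tendsto (fun x => t x * (b x - β)) l (𝓝 r)) (hσ : ∀ x, σ x = ψ x / (f * t x))
    (hc : c = f * p / (q * β) - f * r / β) {v w : ℂ} (hw : w + c ≠ 0) :
    Tendsto (fun x => qPochInf (criticalArg q (b x) (ψ x) (σ x) v) q /
      qPochInf (criticalArg q (b x) (ψ x) (σ x) w) q) l (𝓝 ((v + c) / (w + c))) := by
  have hψ' := tendsto_of_tendsto_mul_sub ht hψ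
  have htσ : Tendsto (fun x => t x * σ x) l (𝓝 (q * β / f)) := by
    refine (hψ'.div_const f).congr' ?_
    filter_upwards [ht.eventually_gt_atTop 0] with x htx
    rw [hσ]
    field_simp
  have hσ' : Tendsto σ l (𝓝 0) :=
    tendsto_of_tendsto_mul_sub ht (by simpa only [sub_zero] using htσ)
  have hc' : c = (p - q * r) / (q * β / f) := by
    rw [hc]
    field_simp
  exact tendsto_qPochInf_div_qPochInf hq1
    (tendsto_criticalArg hq hβ hψ' (tendsto_of_tendsto_mul_sub ht hb) hσ' v)
    (tendsto_criticalArg hq hβ hψ' (tendsto_of_tendsto_mul_sub ht hb) hσ' w)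
    (tendsto_one_sub_criticalArg_div hq hβ (by positivity) ht hψ hb htσ hc' hw)

end CriticalScaling

theorem stmt_14_general (q β f : ℝ) (hq : q ∈ Set.Ioo (0:ℝ) 1) (hβ : 0 < β) (hf : 0 < f)
    (m : ℕ) (p : ℝ) (r : Fin m → ℝ)
    (ψ : ℝ → ℝ) (βk : Fin m → ℝ → ℝ)
    (hψ : Tendsto (fun T : ℝ => T ^ ((1 : ℝ) / 3) * (ψ T - q * β)) atTop (𝓝 p))
    (hβk : ∀ k, Tendsto (fun T : ℝ => T ^ ((1 : ℝ) / 3) * (βk k T - β)) atTop (𝓝 (r k)))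
    (σ : ℝ → ℝ) (hσ : σ = fun T => ψ T / (f * T ^ ((1 : ℝ) / 3)))
    (c : Fin m → ℝ) (hc : ∀ k, c k = f * p / (q * β) - f * r k / β)
    (what vhat : ℂ) (hwhat : ∀ k, what + (c k : ℂ) ≠ 0) :
    Tendsto (fun T : ℝ =>
        ∏ k : Fin m,
          qPochInf ((q : ℂ)⁻¹ * ((βk k T : ℝ) : ℂ)⁻¹ * (((ψ T : ℝ) : ℂ) + ((σ T : ℝ) : ℂ) * vhat)) q /
          qPochInf ((q : ℂ)⁻¹ * ((βk k T : ℝ) : ℂ)⁻¹ * (((ψ T : ℝ) : ℂ) + ((σ T : ℝ) : ℂ) * what)) q)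
      atTop (𝓝 (∏ k : Fin m, (vhat + (c k : ℂ)) / (what + (c k : ℂ)))) := by
  obtain ⟨hq0, hq1⟩ := hq
  have ht : Tendsto (fun T : ℝ => T ^ ((1 : ℝ) / 3)) atTop atTop := tendsto_rpow_atTop (by norm_num)
  exact tendsto_finsetProd _ fun k _ =>
    tendsto_qPochInf_criticalArg_div (abs_lt.2 ⟨by linarith, hq1⟩) hq0.ne' hβ.ne' hf.ne' ht hψ
      (hβk k) (congrFun hσ) (hc k) (hwhat k)

/-- Limit of ratios of q-Pochhammer symbols producing the factors
`∏ (v̂ + c_k)/(ŵ + c_k)` of the Baik–Ben-Arous–Péché kernel. -/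
theorem stmt_14 (q β f : ℝ) (hq : q ∈ Set.Ioo (0:ℝ) 1) (hβ : 0 < β) (hf : 0 < f)
    (m : ℕ) (hm : 1 ≤ m) (p : ℝ) (r : Fin m → ℝ)
    (ψ : ℝ → ℝ) (βk : Fin m → ℝ → ℝ)
    (hψ : Tendsto (fun T : ℝ => T ^ ((1 : ℝ) / 3) * (ψ T - q * β)) atTop (𝓝 p))
    (hβk : ∀ k, Tendsto (fun T : ℝ => T ^ ((1 : ℝ) / 3) * (βk k T - β)) atTop (𝓝 (r k)))
    (σ : ℝ → ℝ) (hσ : σ = fun T => ψ T / (f * T ^ ((1 : ℝ) / 3)))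
    (c : Fin m → ℝ) (hc : ∀ k, c k = f * p / (q * β) - f * r k / β)
    (what vhat : ℂ) (hwhat : ∀ k, what + (c k : ℂ) ≠ 0) :
    Tendsto (fun T : ℝ =>
        ∏ k : Fin m,
          qPochInf ((q : ℂ)⁻¹ * ((βk k T : ℝ) : ℂ)⁻¹ * (((ψ T : ℝ) : ℂ) + ((σ T : ℝ) : ℂ) * vhat)) q /
          qPochInf ((q : ℂ)⁻¹ * ((βk k T : ℝ) : ℂ)⁻¹ * (((ψ T : ℝ) : ℂ) + ((σ T : ℝ) : ℂ) * what)) q)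
      atTop (𝓝 (∏ k : Fin m, (vhat + (c k : ℂ)) / (what + (c k : ℂ)))) :=
  stmt_14_general q β f hq hβ hf m p r ψ βk hψ hβk σ hσ c hc what vhat hwhat
end

section
/- There exist real numbers z₁ ∈ (ϑ_A, ∞), z₂ ∈ (−q, 0), and z₃ ∈ (−∞, −q) such that the set {x ∈ ℝ : x ≠ 0, x ≠ −q, and H'_A(x) = H'_A(ψ)} consists of exactly the four distinct points z₃, z₂, ψ, and z₁. -/
open Complex

/-!
On the real axis `H'_A(x) = q/(x+q) + η log|x+q| + m' log|x|`, whose derivative is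
`(η + m') (x - ψ) (x - ϑ) / (x (x + q)²)` with `η + m' = (b + η)(1 - b) > 0`. Hence it decreases
on `(-∞, -q)` and on `(-q, 0)`, increases on `(0, ψ]`, decreases on `[ψ, ϑ]` and increases on
`[ϑ, ∞)`, while it tends to `+∞` at `±∞` and at `-q⁺`, and to `-∞` at `-q⁻` and at `0⁻`.
So the level `H'_A(ψ)` is a strict maximum on `(0, ϑ]`, and each of the three other monotone
branches crosses it exactly once.
-/

open Filter Set Topology Bornology

theorem exists_eq_of_tendsto_atBot_of_tendsto_atTop {f : ℝ → ℝ} {s : Set ℝ} {l l' : Filter ℝ}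
    [l.NeBot] [l'.NeBot] (hs : IsPreconnected s) (hf : ContinuousOn f s) (hl : s ∈ l)
    (hl' : s ∈ l') (hbot : Tendsto f l atBot) (htop : Tendsto f l' atTop) (y : ℝ) :
    ∃ z ∈ s, f z = y := by
  obtain ⟨u, hu, hus⟩ := ((hbot.eventually_le_atBot y).and hl).exists
  obtain ⟨v, hv, hvs⟩ := ((htop.eventually_ge_atTop y).and hl').exists
  exact hs.intermediate_value hus hvs hf ⟨hu, hv⟩

theorem strictMonoOn_of_hasDerivAt_pos {f f' : ℝ → ℝ} {D : Set ℝ} (hD : Convex ℝ D)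
    (hf : ∀ x ∈ D, HasDerivAt f (f' x) x) (hf' : ∀ x ∈ interior D, 0 < f' x) :
    StrictMonoOn f D :=
  strictMonoOn_of_hasDerivWithinAt_pos hD (fun x hx ↦ (hf x hx).continuousAt.continuousWithinAt)
    (fun x hx ↦ (hf x (interior_subset hx)).hasDerivWithinAt) hf'

theorem strictAntiOn_of_hasDerivAt_neg {f f' : ℝ → ℝ} {D : Set ℝ} (hD : Convex ℝ D)
    (hf : ∀ x ∈ D, HasDerivAt f (f' x) x) (hf' : ∀ x ∈ interior D, f' x < 0) :
    StrictAntiOn f D :=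
  strictAntiOn_of_hasDerivWithinAt_neg hD (fun x hx ↦ (hf x hx).continuousAt.continuousWithinAt)
    (fun x hx ↦ (hf x (interior_subset hx)).hasDerivWithinAt) hf'

section Profile

variable {f : ℝ → ℝ} {p ψ ϑ : ℝ}

theorem setOf_eq_of_strictMonoOn_pieces {z₁ z₂ z₃ : ℝ} (hz₃ : z₃ < p) (hz₂ : z₂ ∈ Ioo p 0)
    (hψ : 0 < ψ) (hψϑ : ψ ≤ ϑ) (hz₁ : ϑ < z₁)
    (h₁ : StrictAntiOn f (Iio p)) (h₂ : StrictAntiOn f (Ioo p 0)) (h₃ : StrictMonoOn f (Ioc 0 ψ))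
    (h₄ : StrictAntiOn f (Icc ψ ϑ)) (h₅ : StrictMonoOn f (Ici ϑ))
    (hf₃ : f z₃ = f ψ) (hf₂ : f z₂ = f ψ) (hf₁ : f z₁ = f ψ) :
    {x | x ≠ 0 ∧ x ≠ p ∧ f x = f ψ} = {z₃, z₂, ψ, z₁} := by
  have hp : p < 0 := hz₂.1.trans hz₂.2
  ext x
  simp only [mem_ofPred_eq, mem_insert_iff, mem_singleton_iff]
  constructor
  · rintro ⟨hx0, hxp, hx⟩
    rcases hxp.lt_or_gt with hxp | hpx
    · exact .inl (h₁.injOn hxp hz₃ (hx.trans hf₃.symm))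
    rcases hx0.lt_or_gt with hx0 | hx0
    · exact .inr (.inl (h₂.injOn ⟨hpx, hx0⟩ hz₂ (hx.trans hf₂.symm)))
    rcases lt_trichotomy x ψ with hxψ | rfl | hψx
    · exact absurd hx (h₃ ⟨hx0, hxψ.le⟩ ⟨hψ, le_rfl⟩ hxψ).ne
    · exact .inr (.inr (.inl rfl))
    rcases le_or_gt x ϑ with hxϑ | hϑx
    · exact absurd hx (h₄ ⟨le_rfl, hψϑ⟩ ⟨hψx.le, hxϑ⟩ hψx).ne
    · exact .inr (.inr (.inr (h₅.injOn hϑx.le hz₁.le (hx.trans hf₁.symm))))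
  · rintro (rfl | rfl | rfl | rfl)
    · exact ⟨(hz₃.trans hp).ne, hz₃.ne, hf₃⟩
    · exact ⟨hz₂.2.ne, hz₂.1.ne', hf₂⟩
    · exact ⟨hψ.ne', (hp.trans hψ).ne', rfl⟩
    · have : 0 < x := hψ.trans_le (hψϑ.trans hz₁.le)
      exact ⟨this.ne', (hp.trans this).ne', hf₁⟩

theorem exists_setOf_eq_of_profile (hp : p < 0) (hψ : 0 < ψ) (hψϑ : ψ < ϑ)
    (hf : ∀ x, x ≠ 0 → x ≠ p → ContinuousAt f x)
    (h₁ : StrictAntiOn f (Iio p)) (h₂ : StrictAntiOn f (Ioo p 0)) (h₃ : StrictMonoOn f (Ioc 0 ψ))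
    (h₄ : StrictAntiOn f (Icc ψ ϑ)) (h₅ : StrictMonoOn f (Ici ϑ))
    (hbot : Tendsto f atBot atTop) (hpl : Tendsto f (𝓝[<] p) atBot)
    (hpr : Tendsto f (𝓝[>] p) atTop) (h0 : Tendsto f (𝓝[<] 0) atBot)
    (htop : Tendsto f atTop atTop) :
    ∃ z₁ ∈ Ioi ϑ, ∃ z₂ ∈ Ioo p 0, ∃ z₃ ∈ Iio p,
      {x | x ≠ 0 ∧ x ≠ p ∧ f x = f ψ} = {z₃, z₂, ψ, z₁} := by
  have hcont : ∀ s : Set ℝ, (∀ x ∈ s, x ≠ 0 ∧ x ≠ p) → ContinuousOn f s := fun s hs x hx ↦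
    (hf x (hs x hx).1 (hs x hx).2).continuousWithinAt
  obtain ⟨z₃, hz₃, hf₃⟩ := exists_eq_of_tendsto_atBot_of_tendsto_atTop isPreconnected_Iio
    (hcont _ fun x hx ↦ ⟨(hx.trans hp).ne, hx.ne⟩) self_mem_nhdsWithin (Iio_mem_atBot p) hpl hbot
    (f ψ)
  obtain ⟨z₂, hz₂, hf₂⟩ := exists_eq_of_tendsto_atBot_of_tendsto_atTop isPreconnected_Ioo
    (hcont _ fun x hx ↦ ⟨hx.2.ne, hx.1.ne'⟩) (Ioo_mem_nhdsLT hp) (Ioo_mem_nhdsGT hp) h0 hpr (f ψ)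
  have hϑ : f ϑ < f ψ := h₄ ⟨le_rfl, hψϑ.le⟩ ⟨hψϑ.le, le_rfl⟩ hψϑ
  obtain ⟨v, hv, hvϑ⟩ := ((htop.eventually_ge_atTop (f ψ)).and (Ici_mem_atTop ϑ)).exists
  obtain ⟨z₁, hz₁, hf₁⟩ := isPreconnected_Ici.intermediate_value self_mem_Ici hvϑ
    (hcont _ fun x hx ↦ have hx0 := hψ.trans (hψϑ.trans_le hx); ⟨hx0.ne', (hp.trans hx0).ne'⟩)
    ⟨hϑ.le, hv⟩
  have hz₁ : ϑ < z₁ := hz₁.lt_of_ne (by rintro rfl; exact hϑ.ne hf₁)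
  exact ⟨z₁, hz₁, z₂, hz₂, z₃, hz₃, setOf_eq_of_strictMonoOn_pieces hz₃ hz₂ hψ hψϑ.le hz₁
    h₁ h₂ h₃ h₄ h₅ hf₃ hf₂ hf₁⟩

end Profile

/-- `Re G_A` on the real axis: `Real.log x` is `log |x|`. -/
noncomputable def realGA (q η m x : ℝ) : ℝ :=
  q / (x + q) + η * Real.log (x + q) + m * Real.log x

section RealGA

variable {q η m : ℝ}

theorem realGA_eq_re (x : ℝ) :
    realGA q η m x =
      ((q : ℂ) / (x + q)).re + η * Real.log ‖(x : ℂ) + q‖ + m * Real.log ‖(x : ℂ)‖ := by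
  rw [← ofReal_add, ← ofReal_div, ofReal_re, norm_real, norm_real, Real.norm_eq_abs,
    Real.norm_eq_abs, Real.log_abs, Real.log_abs, realGA]

theorem hasDerivAt_realGA {x : ℝ} (hx : x ≠ 0) (hxq : x + q ≠ 0) :
    HasDerivAt (realGA q η m)
      (((η + m) * x ^ 2 + q * (η + 2 * m - 1) * x + m * q ^ 2) / (x * (x + q) ^ 2)) x := by
  have hshift : HasDerivAt (· + q) 1 x := (hasDerivAt_id x).add_const q
  have := (((hasDerivAt_const x q).div hshift hxq).add
    (((Real.hasDerivAt_log hxq).comp x hshift).const_mul η)).add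
    ((Real.hasDerivAt_log hx).const_mul m)
  refine this.congr_deriv ?_
  field_simp
  ring

theorem continuousAt_realGA {x : ℝ} (hx : x ≠ 0) (hxq : x ≠ -q) : ContinuousAt (realGA q η m) x :=
  (hasDerivAt_realGA hx (by rwa [← sub_neg_eq_add, sub_ne_zero])).continuousAt

theorem realGA_eq_comp_inv_add_mul_log {x : ℝ} (hx : x ≠ 0) (hxq : x + q ≠ 0) :
    realGA q η m x =
      (q * x⁻¹ / (1 + q * x⁻¹) + η * Real.log (1 + q * x⁻¹)) + (η + m) * Real.log x := by
  have h1 : 1 + q * x⁻¹ = (x + q) / x := by field_simp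
  rw [h1, Real.log_div hxq hx, realGA]
  field_simp
  ring

theorem tendsto_realGA_cobounded (hc : 0 < η + m) :
    Tendsto (realGA q η m) (cobounded ℝ) atTop := by
  have hg : ContinuousAt (fun u ↦ q * u / (1 + q * u) + η * Real.log (1 + q * u)) 0 := by
    have : (1 : ℝ) + q * 0 ≠ 0 := by simp
    fun_prop (disch := assumption)
  have hlog : Tendsto Real.log (cobounded ℝ) atTop := by
    simpa only [Function.comp_def, Real.norm_eq_abs, Real.log_abs] using
      Real.tendsto_log_atTop.comp (tendsto_norm_cobounded_atTop (E := ℝ))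
  refine ((hg.tendsto.comp tendsto_inv₀_cobounded).add_atTop
    (hlog.const_mul_atTop hc)).congr' ?_
  filter_upwards [eventually_ne_cobounded 0, eventually_ne_cobounded (-q)] with x hx hxq
  rw [realGA_eq_comp_inv_add_mul_log hx (by rwa [← sub_neg_eq_add, sub_ne_zero])]
  rfl

theorem realGA_eq_inv_mul_add_mul_log {x : ℝ} (hxq : x + q ≠ 0) :
    realGA q η m x = (x + q)⁻¹ * (q + η * ((x + q) * Real.log (x + q))) + m * Real.log x := by
  rw [realGA]
  field_simp

theorem tendsto_const_add_mul_mul_log_nhds_neg :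
    Tendsto (fun x ↦ q + η * ((x + q) * Real.log (x + q))) (𝓝 (-q)) (𝓝 q) := by
  have h := ((Real.continuous_mul_log.comp (continuous_add_const q)).tendsto (-q)).const_mul η
  simpa using h.const_add q

theorem tendsto_realGA_nhdsGT_neg (hq : 0 < q) :
    Tendsto (realGA q η m) (𝓝[>] (-q)) atTop := by
  have hshift : Tendsto (· + q) (𝓝[>] (-q)) (𝓝[>] 0) := by
    have h := (map_add_right_nhdsGT (c := q) (a := -q)).le
    rwa [neg_add_cancel] at h
  have hlog : Tendsto (fun x ↦ m * Real.log x) (𝓝 (-q)) (𝓝 (m * Real.log (-q))) :=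
    ((Real.continuousAt_log (neg_ne_zero.2 hq.ne')).tendsto).const_mul m
  refine Tendsto.congr' ?_ <| (hlog.mono_left nhdsWithin_le_nhds).add_atTop
    ((tendsto_inv_nhdsGT_zero.comp hshift).atTop_mul_pos hq
      ((tendsto_const_add_mul_mul_log_nhds_neg (η := η)).mono_left nhdsWithin_le_nhds))
  filter_upwards [self_mem_nhdsWithin] with x hx
  rw [realGA_eq_inv_mul_add_mul_log (by linarith [mem_Ioi.1 hx]), add_comm]
  rfl

theorem tendsto_realGA_nhdsLT_neg (hq : 0 < q) :
    Tendsto (realGA q η m) (𝓝[<] (-q)) atBot := by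
  have hshift : Tendsto (· + q) (𝓝[<] (-q)) (𝓝[<] 0) := by
    have h := (map_add_right_nhdsLT (c := q) (a := -q)).le
    rwa [neg_add_cancel] at h
  have hlog : Tendsto (fun x ↦ m * Real.log x) (𝓝 (-q)) (𝓝 (m * Real.log (-q))) :=
    ((Real.continuousAt_log (neg_ne_zero.2 hq.ne')).tendsto).const_mul m
  refine Tendsto.congr' ?_ <| (hlog.mono_left nhdsWithin_le_nhds).add_atBot
    ((tendsto_inv_nhdsLT_zero.comp hshift).atBot_mul_pos hq
      ((tendsto_const_add_mul_mul_log_nhds_neg (η := η)).mono_left nhdsWithin_le_nhds))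
  filter_upwards [self_mem_nhdsWithin] with x hx
  rw [realGA_eq_inv_mul_add_mul_log (by linarith [mem_Iio.1 hx]), add_comm]
  rfl

theorem tendsto_realGA_nhdsNE_zero (hq : q ≠ 0) (hm : 0 < m) :
    Tendsto (realGA q η m) (𝓝[≠] 0) atBot := by
  have hc : ContinuousAt (fun x ↦ q / (x + q) + η * Real.log (x + q)) 0 := by
    have : (0 : ℝ) + q ≠ 0 := by simpa
    fun_prop (disch := assumption)
  exact (hc.tendsto.mono_left nhdsWithin_le_nhds).add_atBot
    (Real.tendsto_log_nhdsNE_zero.const_mul_atBot hm)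

/-- `ψ` and `ϑ` are the roots of the numerator of the derivative of `realGA q η m`. -/
def AreCriticalPoints (q η m ψ ϑ : ℝ) : Prop :=
  ∀ x, (η + m) * x ^ 2 + q * (η + 2 * m - 1) * x + m * q ^ 2 = (η + m) * (x - ψ) * (x - ϑ)

section Monotone

variable {ψ ϑ : ℝ}

theorem AreCriticalPoints.hasDerivAt_realGA (h : AreCriticalPoints q η m ψ ϑ) {x : ℝ}
    (hx : x ≠ 0) (hxq : x + q ≠ 0) :
    HasDerivAt (realGA q η m) ((η + m) * (x - ψ) * (x - ϑ) / (x * (x + q) ^ 2)) x :=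
  h x ▸ _root_.hasDerivAt_realGA hx hxq

theorem AreCriticalPoints.strictAntiOn_Iio (h : AreCriticalPoints q η m ψ ϑ) (hq : 0 < q)
    (hc : 0 < η + m) (hψ : 0 < ψ) (hϑ : 0 < ϑ) : StrictAntiOn (realGA q η m) (Iio (-q)) := by
  refine strictAntiOn_of_hasDerivAt_neg (convex_Iio _)
    (fun x hx ↦ h.hasDerivAt_realGA (by linarith [mem_Iio.1 hx]) (by linarith [mem_Iio.1 hx]))
    fun x hx ↦ ?_
  rw [interior_Iio, mem_Iio] at hx
  have hnum : 0 < (η + m) * (x - ψ) * (x - ϑ) :=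
    mul_pos_of_neg_of_neg (mul_neg_of_pos_of_neg hc (by linarith)) (by linarith)
  exact div_neg_of_pos_of_neg hnum (mul_neg_of_neg_of_pos (by linarith) (by nlinarith))

theorem AreCriticalPoints.strictAntiOn_Ioo (h : AreCriticalPoints q η m ψ ϑ)
    (hc : 0 < η + m) (hψ : 0 < ψ) (hϑ : 0 < ϑ) : StrictAntiOn (realGA q η m) (Ioo (-q) 0) := by
  refine strictAntiOn_of_hasDerivAt_neg (convex_Ioo _ _)
    (fun x hx ↦ h.hasDerivAt_realGA hx.2.ne (by linarith [hx.1])) fun x hx ↦ ?_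
  rw [interior_Ioo] at hx
  obtain ⟨hqx, hx0⟩ := hx
  have hnum : 0 < (η + m) * (x - ψ) * (x - ϑ) :=
    mul_pos_of_neg_of_neg (mul_neg_of_pos_of_neg hc (by linarith)) (by linarith)
  exact div_neg_of_pos_of_neg hnum (mul_neg_of_neg_of_pos hx0 (by nlinarith))

theorem AreCriticalPoints.strictMonoOn_Ioc (h : AreCriticalPoints q η m ψ ϑ) (hq : 0 < q)
    (hc : 0 < η + m) (hψϑ : ψ < ϑ) : StrictMonoOn (realGA q η m) (Ioc 0 ψ) := by
  refine strictMonoOn_of_hasDerivAt_pos (convex_Ioc _ _)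
    (fun x hx ↦ h.hasDerivAt_realGA hx.1.ne' (by linarith [hx.1])) fun x hx ↦ ?_
  rw [interior_Ioc] at hx
  obtain ⟨hx0, hxψ⟩ := hx
  have hnum : 0 < (η + m) * (x - ψ) * (x - ϑ) :=
    mul_pos_of_neg_of_neg (mul_neg_of_pos_of_neg hc (by linarith)) (by linarith)
  exact div_pos hnum (mul_pos hx0 (by nlinarith))

theorem AreCriticalPoints.strictAntiOn_Icc (h : AreCriticalPoints q η m ψ ϑ) (hq : 0 < q)
    (hc : 0 < η + m) (hψ : 0 < ψ) : StrictAntiOn (realGA q η m) (Icc ψ ϑ) := by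
  refine strictAntiOn_of_hasDerivAt_neg (convex_Icc _ _)
    (fun x hx ↦ h.hasDerivAt_realGA (by linarith [hx.1]) (by linarith [hx.1])) fun x hx ↦ ?_
  rw [interior_Icc] at hx
  obtain ⟨hψx, hxϑ⟩ := hx
  have hnum : (η + m) * (x - ψ) * (x - ϑ) < 0 :=
    mul_neg_of_pos_of_neg (mul_pos hc (by linarith)) (by linarith)
  exact div_neg_of_neg_of_pos hnum (mul_pos (by linarith) (by nlinarith))

theorem AreCriticalPoints.strictMonoOn_Ici (h : AreCriticalPoints q η m ψ ϑ) (hq : 0 < q)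
    (hc : 0 < η + m) (hϑ : 0 < ϑ) (hψϑ : ψ < ϑ) : StrictMonoOn (realGA q η m) (Ici ϑ) := by
  refine strictMonoOn_of_hasDerivAt_pos (convex_Ici _)
    (fun x hx ↦ h.hasDerivAt_realGA (by linarith [mem_Ici.1 hx]) (by linarith [mem_Ici.1 hx]))
    fun x hx ↦ ?_
  rw [interior_Ici, mem_Ioi] at hx
  have hnum : 0 < (η + m) * (x - ψ) * (x - ϑ) := mul_pos (mul_pos hc (by linarith)) (by linarith)
  exact div_pos hnum (mul_pos (by linarith) (by nlinarith))

end Monotone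

end RealGA

theorem areCriticalPoints_of_asep {q b η m : ℝ} (hm : m = b * (1 - b) - b * η) (hb : b ≠ 1)
    (hbη : b + η ≠ 0) : AreCriticalPoints q η m (q * b / (1 - b)) (q * (1 - b - η) / (b + η)) := by
  intro x
  have : 1 - b ≠ 0 := sub_ne_zero.2 hb.symm
  subst hm
  field_simp
  ring

/-- In the Gaussian-fluctuation regime of the ASEP, the real points of the level
set `{Re G_A = G_A(ψ)}` (away from the singularities `0` and `-q`) are exactly
four: `z₃ < -q < z₂ < 0 < ψ`, and `z₁ > ϑ_A`. -/
theorem stmt_16 (q b η : ℝ) (hq : q ∈ Set.Ioo (0:ℝ) 1) (hb : b ∈ Set.Ioo (0:ℝ) 1)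
    (hη : η ∈ Set.Ioo (-b) (1 - 2 * b))
    (m' ψ ϑ : ℝ) (hm : m' = b * (1 - b) - b * η) (hψ : ψ = q * b / (1 - b))
    (hϑ : ϑ = q * (1 - b - η) / (b + η))
    (H : ℂ → ℝ)
    (hH : H = fun z => ((q : ℂ) / (z + q)).re + η * Real.log ‖z + q‖
      + m' * Real.log ‖z‖) :
    ∃ z₁ ∈ Set.Ioi ϑ, ∃ z₂ ∈ Set.Ioo (-q) 0, ∃ z₃ ∈ Set.Iio (-q),
      {x : ℝ | x ≠ 0 ∧ x ≠ -q ∧ H (x : ℂ) = H (ψ : ℂ)} = {z₃, z₂, ψ, z₁} ∧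
      z₃ ≠ z₂ ∧ z₃ ≠ ψ ∧ z₃ ≠ z₁ ∧ z₂ ≠ ψ ∧ z₂ ≠ z₁ ∧ ψ ≠ z₁ := by
  obtain ⟨hq, -⟩ := hq
  obtain ⟨hb0, hb1⟩ := hb
  obtain ⟨hηb, hη⟩ := hη
  have hbη : 0 < b + η := by linarith
  have hc : 0 < η + m' := by rw [hm]; nlinarith
  have hm' : 0 < m' := by rw [hm]; nlinarith
  have hψ0 : 0 < ψ := by rw [hψ]; exact div_pos (by positivity) (by linarith)
  have hψϑ : ψ < ϑ := by
    rw [hψ, hϑ, div_lt_div_iff₀ (by linarith) hbη]; nlinarith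
  have hϑ0 : 0 < ϑ := hψ0.trans hψϑ
  have hcrit : AreCriticalPoints q η m' ψ ϑ :=
    hψ ▸ hϑ ▸ areCriticalPoints_of_asep hm hb1.ne hbη.ne'
  have hH : ∀ x : ℝ, H x = realGA q η m' x := fun x ↦ hH ▸ (realGA_eq_re x).symm
  simp only [hH]
  obtain ⟨z₁, hz₁, z₂, hz₂, z₃, hz₃, hset⟩ := exists_setOf_eq_of_profile (neg_neg_of_pos hq) hψ0
    hψϑ (fun _ ↦ continuousAt_realGA)
    (hcrit.strictAntiOn_Iio hq hc hψ0 hϑ0) (hcrit.strictAntiOn_Ioo hc hψ0 hϑ0)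
    (hcrit.strictMonoOn_Ioc hq hc hψϑ) (hcrit.strictAntiOn_Icc hq hc hψ0)
    (hcrit.strictMonoOn_Ici hq hc hϑ0 hψϑ)
    ((tendsto_realGA_cobounded hc).mono_left IsOrderBornology.atBot_le_cobounded)
    (tendsto_realGA_nhdsLT_neg hq) (tendsto_realGA_nhdsGT_neg hq)
    ((tendsto_realGA_nhdsNE_zero hq.ne' hm').mono_left (nhdsWithin_mono _ fun _ h ↦ ne_of_lt h))
    ((tendsto_realGA_cobounded hc).mono_left IsOrderBornology.atTop_le_cobounded)
  have h₃₂ : z₃ < z₂ := (mem_Iio.1 hz₃).trans hz₂.1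
  have h₂ψ : z₂ < ψ := hz₂.2.trans hψ0
  have hψ₁ : ψ < z₁ := hψϑ.trans hz₁
  exact ⟨z₁, hz₁, z₂, hz₂, z₃, hz₃, hset, h₃₂.ne, (h₃₂.trans h₂ψ).ne,
    (h₃₂.trans (h₂ψ.trans hψ₁)).ne, h₂ψ.ne, (h₂ψ.trans hψ₁).ne, hψ₁.ne⟩
end

section
/- For every z ∈ ℂ with z ∉ (−∞, 0], z + q ∉ (−∞, 0], and κ^{−1}z + q ∉ (−∞, 0], the function G_V has a complex derivative at z equal to ((1 − b)·(κη/Λ − 1)/(z·(z + q)·(z + qκ))) · (z − ψ) · (z − ϑ_V). -/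
/-!
`G_V'` is a sum of three simple fractions with poles `0`, `-q`, `-qκ`. Over the common
denominator `z (z + q) (z + qκ)` its numerator is a quadratic in `z` with leading coefficient
`(1 - b)(κη/Λ - 1)`, and the choice of `m'` makes `ψ` and `ϑ_V` its two roots.
-/

open Complex

theorem hasDerivAt_log_affine_combination {κ q η m z : ℂ} (hκ : κ ≠ 0) (hz : z ∈ slitPlane)
    (hzq : z + q ∈ slitPlane) (hzκq : κ⁻¹ * z + q ∈ slitPlane) :
    HasDerivAt (fun w => η * log (κ⁻¹ * w + q) - log (w + q) + m * log w)
      ((η * z * (z + q) - z * (z + q * κ) + m * (z + q) * (z + q * κ))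
        / (z * (z + q) * (z + q * κ))) z := by
  have hz0 := slitPlane_ne_zero hz
  have hzq0 := slitPlane_ne_zero hzq
  have hzκq0 : z + q * κ ≠ 0 := by
    have := slitPlane_ne_zero hzκq
    contrapose! this
    field_simp
    linear_combination this
  have hscaled : κ⁻¹ / (κ⁻¹ * z + q) = 1 / (z + q * κ) := by
    field_simp
  have hinner : HasDerivAt (fun w => κ⁻¹ * w + q) κ⁻¹ z := by
    simpa using ((hasDerivAt_id z).const_mul κ⁻¹).add_const q
  refine (((hinner.clog hzκq).const_mul η).sub (((hasDerivAt_id z).add_const q).clog hzq)).add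
    (((hasDerivAt_id z).clog hz).const_mul m) |>.congr_deriv ?_
  simp only [id, hscaled]
  field_simp

theorem critical_point_factorization {q κ b η Λ z : ℂ} (hΛ : Λ = b + κ * (1 - b)) (hΛ0 : Λ ≠ 0)
    (hb : 1 - b ≠ 0) (hκη : κ * η - Λ ≠ 0) :
    (1 - b) * (κ * η / Λ - 1) * (z - q * b / (1 - b)) * (z - q * κ * (Λ - η) / (κ * η - Λ))
      = η * z * (z + q) - z * (z + q * κ) + (b - b * η / Λ) * (z + q) * (z + q * κ) := by
  field_simp
  subst hΛ
  ring

theorem stmt_18_general (q κ b η : ℝ) (hκ : 1 < κ)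
    (hb : b ∈ Set.Ioo (0:ℝ) 1)
    (Λ : ℝ) (hΛ : Λ = b + κ * (1 - b)) (hκη : κ * η ≠ Λ)
    (m' ψ ϑ : ℝ) (hm : m' = b - b * η / Λ) (hψ : ψ = q * b / (1 - b))
    (hϑ : ϑ = q * κ * (Λ - η) / (κ * η - Λ))
    (G : ℂ → ℂ)
    (hG : G = fun z => (η : ℂ) * Complex.log ((κ : ℂ)⁻¹ * z + q)
      - Complex.log (z + q) + (m' : ℂ) * Complex.log z)
    (z : ℂ) (hz : z ∈ Complex.slitPlane) (hzq : z + q ∈ Complex.slitPlane)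
    (hzκq : (κ : ℂ)⁻¹ * z + q ∈ Complex.slitPlane) :
    HasDerivAt G
      (((1 - (b : ℂ)) * ((κ : ℂ) * η / Λ - 1) / (z * (z + q) * (z + q * κ)))
        * (z - ψ) * (z - ϑ)) z := by
  obtain ⟨hb0, hb1⟩ := hb
  have hκ0 : (κ : ℂ) ≠ 0 := by exact_mod_cast (zero_lt_one.trans hκ).ne'
  have hΛ0 : (Λ : ℂ) ≠ 0 := by
    have hΛpos : 0 < Λ := by rw [hΛ]; nlinarith
    exact_mod_cast hΛpos.ne'
  have hb1' : 1 - (b : ℂ) ≠ 0 := by exact_mod_cast (sub_pos.2 hb1).ne'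
  have hκη' : (κ : ℂ) * η - Λ ≠ 0 := by exact_mod_cast sub_ne_zero.2 hκη
  subst hG hm hψ hϑ
  convert hasDerivAt_log_affine_combination hκ0 hz hzq hzκq using 1
  push_cast
  rw [← critical_point_factorization (by exact_mod_cast hΛ) hΛ0 hb1' hκη']
  ring

/-- The factorization of `G_V'` into its two real critical points `ψ` and `ϑ_V`
in the Gaussian-fluctuation regime of the stochastic six-vertex model. -/
theorem stmt_18 (q κ b η : ℝ) (hq : q ∈ Set.Ioo (0:ℝ) 1) (hκ : 1 < κ)
    (hb : b ∈ Set.Ioo (0:ℝ) 1)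
    (Λ : ℝ) (hΛ : Λ = b + κ * (1 - b)) (hκη : κ * η ≠ Λ)
    (m' ψ ϑ : ℝ) (hm : m' = b - b * η / Λ) (hψ : ψ = q * b / (1 - b))
    (hϑ : ϑ = q * κ * (Λ - η) / (κ * η - Λ))
    (G : ℂ → ℂ)
    (hG : G = fun z => (η : ℂ) * Complex.log ((κ : ℂ)⁻¹ * z + q)
      - Complex.log (z + q) + (m' : ℂ) * Complex.log z)
    (z : ℂ) (hz : z ∈ Complex.slitPlane) (hzq : z + q ∈ Complex.slitPlane)
    (hzκq : (κ : ℂ)⁻¹ * z + q ∈ Complex.slitPlane) :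
    HasDerivAt G
      (((1 - (b : ℂ)) * ((κ : ℂ) * η / Λ - 1) / (z * (z + q) * (z + q * κ)))
        * (z - ψ) * (z - ϑ)) z :=
  stmt_18_general q κ b η hκ hb Λ hΛ hκη m' ψ ϑ hm hψ hϑ G hG z hz hzq hzκq
end

section
/- Let (X, μ) be a measure space and let K, K₁ : X × X → ℂ be measurable. Suppose there is an integrable function 𝐊 : X → ℝ such that |K(x,y)| ≤ 𝐊(x) and |K₁(x,y)| ≤ 𝐊(x) for all x, y ∈ X, and set B = ∫_X 𝐊 dμ and K' = K₁ − K. Then: (i) the series Σ_{k=1}^∞ (1/k!) ∫_{X^k} |det( (K(x_i, x_j))_{i,j=1}^k )| dμ^{⊗k} is at most Σ_{k=1}^∞ B^k·k^{k/2}/k!, hence finite, and the same holds with K₁ in place of K; and (ii) | Σ_{k=1}^∞ (1/k!) ∫_{X^k} det( (K₁(x_i,x_j))_{i,j=1}^k ) dμ^{⊗k} − Σ_{k=1}^∞ (1/k!) ∫_{X^k} det( (K(x_i,x_j))_{i,j=1}^k ) dμ^{⊗k} | ≤ Σ_{k=1}^∞ (2^k·k^{k/2}/(k−1)!) ∫_{X^k}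 ( (1/k)·Σ_{j=1}^k |K'(x₁, x_j)|² )^{1/2} · ∏_{i=2}^k ( (1/k)·Σ_{j=1}^k ( |K(x_i, x_j)|² + |K'(x_i, x_j)|² ) )^{1/2} dμ^{⊗k}. -/
/-!
Every term of both series is controlled by Hadamard's inequality
`|det A| ≤ ∏ᵢ ‖row i of A‖`: with `|K(x, y)| ≤ 𝐊(x)` the `k`-th determinant is at most
`k^{k/2} ∏ᵢ 𝐊(xᵢ)`, which integrates to `k^{k/2} B^k`, and `k^{k/2} B^k / k!` is summable
because `k! ≥ (k/e)^k`.

For the difference, `det (K₁(xᵢ, xⱼ)) - det (K(xᵢ, xⱼ))` telescopes, replacing one row at a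
time, into `k` determinants whose `m`-th row is a row of `K'` and whose other rows are rows of
`K` or of `K₁ = K + K'`. Exchanging the points `x₀` and `x_m` (the product measure is symmetric)
moves the `K'` row to the top; Hadamard's inequality, together with
`|K₁|² ≤ 2 (|K|² + |K'|²)` for the remaining rows, then bounds each of the `k` integrals by
`2^{(k-1)/2} k^{k/2}` times the integral on the right-hand side.
-/

open MeasureTheory

/-- The `k`-th term of the Fredholm determinant series of the kernel `K`:
the integral of `det (K(x_i, x_j))_{i,j=1}^k` over `X^k`. -/
noncomputable def fredholmTerm {X : Type*} [MeasurableSpace X] (μ : Measure X)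
    [SigmaFinite μ] (K : X × X → ℂ) (k : ℕ) : ℂ :=
  ∫ x : Fin k → X, Matrix.det (Matrix.of fun i j => K (x i, x j))
    ∂(Measure.pi fun _ => μ)

/-- The `k`-th term of the absolute Fredholm determinant series of the kernel `K`:
the integral of `|det (K(x_i, x_j))_{i,j=1}^k|` over `X^k`. -/
noncomputable def fredholmTermAbs {X : Type*} [MeasurableSpace X] (μ : Measure X)
    [SigmaFinite μ] (K : X × X → ℂ) (k : ℕ) : ℝ :=
  ∫ x : Fin k → X, ‖Matrix.det (Matrix.of fun i j => K (x i, x j))‖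
    ∂(Measure.pi fun _ => μ)

open Finset
open scoped Nat

theorem summable_pow_mul_rpow_half_div_factorial (C : ℝ) :
    Summable fun k : ℕ => C ^ k * (k : ℝ) ^ ((k : ℝ) / 2) / k ! := by
  refine summable_of_isBigO_nat summable_geometric_two <| Asymptotics.IsBigO.of_bound 1 <|
    Filter.eventually_atTop.2 ⟨⌈(2 * |C| * Real.exp 1) ^ 2⌉₊, fun k hk => ?_⟩
  have hfac : (0 : ℝ) < k ! := mod_cast k.factorial_pos
  have hsqrt : 2 * |C| * Real.exp 1 ≤ √k :=
    Real.le_sqrt_of_sq_le ((Nat.le_ceil _).trans (mod_cast hk))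
  have hpow : (k : ℝ) ^ k ≤ Real.exp 1 ^ k * k ! := by
    rw [Real.exp_one_pow, ← div_le_iff₀ hfac]
    exact Real.pow_div_factorial_le_exp _ k.cast_nonneg k
  have key : 2 ^ k * (|C| ^ k * √k ^ k) ≤ k ! := by
    refine le_of_mul_le_mul_left ?_ (by positivity : 0 < Real.exp 1 ^ k)
    calc Real.exp 1 ^ k * (2 ^ k * (|C| ^ k * √k ^ k))
        = (2 * |C| * Real.exp 1) ^ k * √k ^ k := by ring
      _ ≤ √k ^ k * √k ^ k := by gcongr
      _ = (k : ℝ) ^ k := by rw [← mul_pow, Real.mul_self_sqrt k.cast_nonneg]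
      _ ≤ Real.exp 1 ^ k * k ! := hpow
  rw [Real.rpow_div_two_eq_sqrt _ k.cast_nonneg, Real.rpow_natCast, norm_div, norm_mul, norm_pow,
    norm_pow, Real.norm_eq_abs, Real.norm_of_nonneg (by positivity), Real.norm_of_nonneg hfac.le,
    one_mul, norm_pow, Real.norm_of_nonneg (by norm_num), div_le_iff₀ hfac]
  calc |C| ^ k * √k ^ k = (1 / 2) ^ k * (2 ^ k * (|C| ^ k * √k ^ k)) := by
        rw [← mul_assoc, ← mul_pow (1 / 2 : ℝ)]; norm_num
    _ ≤ (1 / 2) ^ k * k ! := by gcongr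

theorem summable_pow_succ_mul_rpow_half_div_factorial {C : ℝ} (hC : 0 ≤ C) :
    Summable fun k : ℕ => C ^ (k + 1) * ((k : ℝ) + 1) ^ (((k : ℝ) + 1) / 2) / k ! := by
  refine ((summable_nat_add_iff 1).2 (summable_pow_mul_rpow_half_div_factorial (2 * C)))
    |>.of_nonneg_of_le (fun k => by positivity) fun k => ?_
  have hk : ((k : ℝ) + 1) ≤ 2 ^ (k + 1) := mod_cast Nat.lt_two_pow_self.le
  have hfac : ((k + 1)! : ℝ) = ((k : ℝ) + 1) * k ! := by push_cast [Nat.factorial_succ]; ring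
  set P := ((k : ℝ) + 1) ^ (((k : ℝ) + 1) / 2)
  calc C ^ (k + 1) * P / k ! = ((k : ℝ) + 1) * (C ^ (k + 1) * P) / ((k + 1)! : ℝ) := by
        rw [hfac]; field_simp
    _ ≤ 2 ^ (k + 1) * (C ^ (k + 1) * P) / ((k + 1)! : ℝ) := by gcongr
    _ = (2 * C) ^ (k + 1) * ((k + 1 : ℕ) : ℝ) ^ (((k + 1 : ℕ) : ℝ) / 2) / ((k + 1)! : ℝ) := by
        push_cast; ring

theorem Real.sqrt_sum_le_sqrt_card_mul {ι : Type*} [Fintype ι] {a : ι → ℝ} {c : ℝ} (hc : 0 ≤ c)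
    (ha : ∀ i, a i ≤ c ^ 2) : √(∑ i, a i) ≤ √(Fintype.card ι) * c := by
  rw [← Real.sqrt_sq hc, ← Real.sqrt_mul (Nat.cast_nonneg _)]
  refine Real.sqrt_le_sqrt ?_
  simpa using Finset.sum_le_sum fun i (_ : i ∈ univ) => ha i

theorem Real.sqrt_inv_succ_mul_sum_le {k : ℕ} {a : Fin (k + 1) → ℝ} {c : ℝ} (hc : 0 ≤ c)
    (ha : ∀ i, a i ≤ c ^ 2) : √(((k : ℝ) + 1)⁻¹ * ∑ i, a i) ≤ c := by
  refine Real.sqrt_le_iff.2 ⟨hc, ?_⟩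
  rw [inv_mul_le_iff₀ (by positivity)]
  simpa using Finset.sum_le_sum fun i (_ : i ∈ univ) => ha i

theorem Matrix.norm_det_le_prod_sqrt_sum_sq {𝕜 : Type*} [RCLike 𝕜] {n : ℕ}
    (A : Matrix (Fin n) (Fin n) 𝕜) : ‖A.det‖ ≤ ∏ i, √(∑ j, ‖A i j‖ ^ 2) := by
  set v : Fin n → EuclideanSpace 𝕜 (Fin n) := fun i => WithLp.toLp 2 (A i)
  have hdim : Module.finrank 𝕜 (EuclideanSpace 𝕜 (Fin n)) = Fintype.card (Fin n) := by simp
  set e := EuclideanSpace.basisFun (Fin n) 𝕜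
  -- Gram–Schmidt on the rows: in the resulting orthonormal basis the rows form a triangular matrix.
  set b := InnerProductSpace.gramSchmidtOrthonormalBasis hdim v
  have hA : A.det = e.toBasis.det v := by
    rw [Module.Basis.det_apply, ← Matrix.det_transpose]
    rfl
  have hchange : e.toBasis.det v = e.toBasis.det b * b.toBasis.det v := by
    conv_lhs => rw [e.toBasis.det.eq_smul_basis_det b.toBasis]
    simp
  rw [hA, hchange, norm_mul, e.det_to_matrix_orthonormalBasis, one_mul,
    InnerProductSpace.gramSchmidtOrthonormalBasis_det, norm_prod]
  gcongr with i
  simpa [b.orthonormal.1 i, EuclideanSpace.norm_eq, v] using norm_inner_le_norm (𝕜 := 𝕜) (b i) (v i)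

theorem Matrix.det_sub_det_eq_sum_det_updateRow {R : Type*} [CommRing R] {n : ℕ}
    (A B : Matrix (Fin n) (Fin n) R) :
    B.det - A.det = ∑ m : Fin n,
      ((Matrix.of fun i j => if i < m then B i j else A i j).updateRow m (B m - A m)).det := by
  let T (t : ℕ) : Matrix (Fin n) (Fin n) R :=
    Matrix.of fun i j => if (i : ℕ) < t then B i j else A i j
  have hstep (m : Fin n) : (T (m + 1)).det - (T m).det =
      ((Matrix.of fun i j => if i < m then B i j else A i j).updateRow m (B m - A m)).det := by
    have hsucc : T (m + 1) = (T m).updateRow m (A m + (B m - A m)) := by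
      ext i j
      rcases lt_trichotomy i m with h | rfl | h
      · simp [T, h.ne, h, h.le]
      · simp [T]
      · simp [T, h.ne', lt_asymm h, not_le.2 h]
    have hself : (T m).updateRow m (A m) = T m := by
      conv_rhs => rw [← Matrix.updateRow_eq_self (T m) m]
      congr 1; ext j; simp [T]
    rw [hsucc, Matrix.det_updateRow_add, hself, add_sub_cancel_left]
    rfl
  rw [← Finset.sum_congr rfl fun m _ => hstep m,
    Fin.sum_univ_eq_sum_range (fun t => (T (t + 1)).det - (T t).det),
    Finset.sum_range_sub (fun t => (T t).det)]
  simp [T]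
  rfl

theorem Matrix.det_of_comp_perm {ι X R : Type*} [Fintype ι] [DecidableEq ι] [CommRing R]
    (L : ι → X × X → R) (x : ι → X) (σ : Equiv.Perm ι) :
    (Matrix.of fun i j => L i (x (σ i), x (σ j))).det =
      (Matrix.of fun i j => L (σ.symm i) (x i, x j)).det := by
  rw [← Matrix.det_submatrix_equiv_self σ (Matrix.of fun i j => L (σ.symm i) (x i, x j))]
  congr 1
  ext i j
  simp

section Kernels

variable {X : Type*}

theorem norm_det_of_kernel_le {n : ℕ} {L : Fin n → X × X → ℂ} {W : X → ℝ} (hW : ∀ x, 0 ≤ W x)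
    (hL : ∀ i x y, ‖L i (x, y)‖ ≤ W x) (x : Fin n → X) :
    ‖(Matrix.of fun i j => L i (x i, x j)).det‖ ≤ ∏ i, √n * W (x i) := by
  refine (Matrix.norm_det_le_prod_sqrt_sum_sq _).trans
    (prod_le_prod (fun _ _ => Real.sqrt_nonneg _) fun i _ => ?_)
  simpa using Real.sqrt_sum_le_sqrt_card_mul (hW (x i)) fun j =>
    pow_le_pow_left₀ (norm_nonneg _) (hL i (x i) (x j)) 2

def telescopingKernel {R : Type*} [Sub R] (K K₁ : X × X → R) {n : ℕ} (m : Fin n) :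
    Fin n → X × X → R :=
  Function.update (fun i => if i < m then K₁ else K) m (K₁ - K)

theorem telescopingKernel_self {R : Type*} [Sub R] (K K₁ : X × X → R) {n : ℕ} (m : Fin n) :
    telescopingKernel K K₁ m m = K₁ - K :=
  Function.update_self _ _ _

theorem telescopingKernel_of_ne {R : Type*} [Sub R] (K K₁ : X × X → R) {n : ℕ} {m i : Fin n}
    (h : i ≠ m) : telescopingKernel K K₁ m i = K ∨ telescopingKernel K K₁ m i = K₁ := by
  rw [telescopingKernel, Function.update_of_ne h]
  split_ifs <;> simp

theorem det_of_kernel_sub_det_of_kernel {R : Type*} [CommRing R] (K K₁ : X × X → R) {n : ℕ}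
    (x : Fin n → X) :
    (Matrix.of fun i j => K₁ (x i, x j)).det - (Matrix.of fun i j => K (x i, x j)).det =
      ∑ m, (Matrix.of fun i j => telescopingKernel K K₁ m i (x i, x j)).det := by
  rw [Matrix.det_sub_det_eq_sum_det_updateRow]
  refine Finset.sum_congr rfl fun m _ => congrArg Matrix.det ?_
  ext i j
  rcases eq_or_ne i m with rfl | h
  · simp [telescopingKernel_self]
  · simp [telescopingKernel, h, apply_ite (fun L : X × X → R => L (x i, x j))]

theorem norm_sub_kernel_le {K K₁ : X × X → ℂ} {W : X → ℝ} (hK : ∀ x y, ‖K (x, y)‖ ≤ W x)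
    (hK₁ : ∀ x y, ‖K₁ (x, y)‖ ≤ W x) (x y : X) : ‖(K₁ - K) (x, y)‖ ≤ 2 * W x := by
  simpa [two_mul, add_comm] using (norm_sub_le _ _).trans (add_le_add (hK₁ x y) (hK x y))

theorem norm_telescopingKernel_le {K K₁ : X × X → ℂ} {W : X → ℝ} (hW : ∀ x, 0 ≤ W x)
    (hK : ∀ x y, ‖K (x, y)‖ ≤ W x) (hK₁ : ∀ x y, ‖K₁ (x, y)‖ ≤ W x) {n : ℕ} (m i : Fin n)
    (x y : X) : ‖telescopingKernel K K₁ m i (x, y)‖ ≤ 2 * W x := by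
  rcases eq_or_ne i m with rfl | h
  · rw [telescopingKernel_self]
    exact norm_sub_kernel_le hK hK₁ x y
  · rcases telescopingKernel_of_ne K K₁ h with h | h <;> rw [h] <;> linarith [hK x y, hK₁ x y, hW x]

noncomputable def perturbationIntegrand (K K' : X × X → ℂ) (k : ℕ) (x : Fin (k + 1) → X) : ℝ :=
  √(((k : ℝ) + 1)⁻¹ * ∑ j, ‖K' (x 0, x j)‖ ^ 2) *
    ∏ i ∈ univ.erase 0, √(((k : ℝ) + 1)⁻¹ * ∑ j, (‖K (x i, x j)‖ ^ 2 + ‖K' (x i, x j)‖ ^ 2))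

theorem perturbationIntegrand_nonneg (K K' : X × X → ℂ) (k : ℕ) (x : Fin (k + 1) → X) :
    0 ≤ perturbationIntegrand K K' k x :=
  mul_nonneg (Real.sqrt_nonneg _) (prod_nonneg fun _ _ => Real.sqrt_nonneg _)

theorem perturbationIntegrand_le_prod {K K' : X × X → ℂ} {W : X → ℝ} (hW : ∀ x, 0 ≤ W x)
    (hK : ∀ x y, ‖K (x, y)‖ ≤ W x) (hK' : ∀ x y, ‖K' (x, y)‖ ≤ 2 * W x) (k : ℕ)
    (x : Fin (k + 1) → X) :
    perturbationIntegrand K K' k x ≤ ∏ i, √5 * W (x i) := by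
  have hsq (i j : Fin (k + 1)) : ‖K' (x i, x j)‖ ^ 2 ≤ 4 * W (x i) ^ 2 := by
    nlinarith [norm_nonneg (K' (x i, x j)), hK' (x i) (x j)]
  have h5 (i : Fin (k + 1)) : (√5 * W (x i)) ^ 2 = 5 * W (x i) ^ 2 := by
    rw [mul_pow, Real.sq_sqrt (by norm_num)]
  rw [perturbationIntegrand, ← mul_prod_erase _ _ (mem_univ 0)]
  refine mul_le_mul ?_ (prod_le_prod (fun _ _ => Real.sqrt_nonneg _) fun i _ => ?_)
    (prod_nonneg fun _ _ => Real.sqrt_nonneg _) (by positivity [hW (x 0)])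
  · refine Real.sqrt_inv_succ_mul_sum_le (by positivity [hW (x 0)]) fun j => ?_
    nlinarith [hsq 0 j, h5 0, sq_nonneg (W (x 0))]
  · refine Real.sqrt_inv_succ_mul_sum_le (by positivity [hW (x i)]) fun j => ?_
    nlinarith [hsq i j, h5 i, pow_le_pow_left₀ (norm_nonneg _) (hK (x i) (x j)) 2]

theorem norm_det_le_perturbationIntegrand {K K₁ : X × X → ℂ} {k : ℕ}
    {L : Fin (k + 1) → X × X → ℂ} (hL0 : L 0 = K₁ - K) (hL : ∀ a ≠ 0, L a = K ∨ L a = K₁)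
    (x : Fin (k + 1) → X) :
    ‖(Matrix.of fun a b => L a (x a, x b)).det‖ ≤
      √2 ^ k * √((k : ℝ) + 1) ^ (k + 1) * perturbationIntegrand K (K₁ - K) k x := by
  have hn : (0 : ℝ) < k + 1 := by positivity
  have hrow0 : √(∑ b, ‖L 0 (x 0, x b)‖ ^ 2) =
      √((k : ℝ) + 1) * √(((k : ℝ) + 1)⁻¹ * ∑ b, ‖(K₁ - K) (x 0, x b)‖ ^ 2) := by
    rw [hL0, ← Real.sqrt_mul hn.le, mul_inv_cancel_left₀ hn.ne']
  have hrow (a : Fin (k + 1)) (ha : a ≠ 0) : √(∑ b, ‖L a (x a, x b)‖ ^ 2) ≤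
      √2 * (√((k : ℝ) + 1) * √(((k : ℝ) + 1)⁻¹ *
        ∑ b, (‖K (x a, x b)‖ ^ 2 + ‖(K₁ - K) (x a, x b)‖ ^ 2))) := by
    rw [← Real.sqrt_mul hn.le, mul_inv_cancel_left₀ hn.ne', ← Real.sqrt_mul zero_le_two, mul_sum]
    refine Real.sqrt_le_sqrt (sum_le_sum fun b _ => ?_)
    rcases hL a ha with h | h <;> rw [h]
    · nlinarith [sq_nonneg ‖(K₁ - K) (x a, x b)‖]
    · calc ‖K₁ (x a, x b)‖ ^ 2 ≤ (‖K (x a, x b)‖ + ‖(K₁ - K) (x a, x b)‖) ^ 2 := by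
            gcongr
            simpa using norm_add_le (K (x a, x b)) ((K₁ - K) (x a, x b))
        _ ≤ _ := add_sq_le
  calc _ ≤ ∏ a, √(∑ b, ‖L a (x a, x b)‖ ^ 2) := Matrix.norm_det_le_prod_sqrt_sum_sq _
    _ = √(∑ b, ‖L 0 (x 0, x b)‖ ^ 2) * ∏ a ∈ univ.erase 0, √(∑ b, ‖L a (x a, x b)‖ ^ 2) :=
        (mul_prod_erase _ _ (mem_univ 0)).symm
    _ ≤ √((k : ℝ) + 1) * √(((k : ℝ) + 1)⁻¹ * ∑ b, ‖(K₁ - K) (x 0, x b)‖ ^ 2) *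
          ∏ a ∈ univ.erase 0, √2 * (√((k : ℝ) + 1) * √(((k : ℝ) + 1)⁻¹ *
            ∑ b, (‖K (x a, x b)‖ ^ 2 + ‖(K₁ - K) (x a, x b)‖ ^ 2))) := by
        rw [hrow0]
        gcongr with a ha
        exact hrow a (ne_of_mem_erase ha)
    _ = _ := by
        rw [prod_mul_distrib, prod_mul_distrib, prod_const, prod_const,
          card_erase_of_mem (mem_univ 0), card_univ, Fintype.card_fin, Nat.add_sub_cancel,
          perturbationIntegrand]
        ring

end Kernels

section Integrals

variable {X : Type*} [MeasurableSpace X] {μ : Measure X} [SigmaFinite μ]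

theorem measurable_det_of_kernel {ι : Type*} [Fintype ι] [DecidableEq ι] {L : ι → X × X → ℂ}
    (hL : ∀ i, Measurable (L i)) :
    Measurable fun x : ι → X => (Matrix.of fun i j => L i (x i, x j)).det := by
  simp only [Matrix.det_apply, Matrix.of_apply]
  fun_prop

theorem measurable_perturbationIntegrand {K K' : X × X → ℂ} (hK : Measurable K)
    (hK' : Measurable K') (k : ℕ) : Measurable (perturbationIntegrand K K' k) := by
  unfold perturbationIntegrand
  fun_prop

theorem integral_comp_perm_pi {ι E : Type*} [Fintype ι] [NormedAddCommGroup E] [NormedSpace ℝ E]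
    (σ : Equiv.Perm ι) (F : (ι → X) → E) :
    ∫ x, F (x ∘ σ) ∂(Measure.pi fun _ => μ) = ∫ x, F x ∂(Measure.pi fun _ => μ) :=
  (measurePreserving_arrowCongr' (fun _ => μ) (fun _ => μ) σ.symm (MeasurableEquiv.refl X)
    fun _ => MeasurePreserving.id μ).integral_comp' F

theorem integrable_of_norm_le_prod {ι E : Type*} [Fintype ι] [NormedAddCommGroup E]
    {F : (ι → X) → E} (hF : AEStronglyMeasurable F (Measure.pi fun _ => μ)) {w : X → ℝ}
    (hw : Integrable w μ) (hle : ∀ x, ‖F x‖ ≤ ∏ i, w (x i)) :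
    Integrable F (Measure.pi fun _ => μ) :=
  (Integrable.fintype_prod fun _ => hw).mono' hF (.of_forall hle)

theorem integral_norm_le_pow_of_norm_le_prod {ι E : Type*} [Fintype ι] [NormedAddCommGroup E]
    {F : (ι → X) → E} {w : X → ℝ} (hw : Integrable w μ) (hle : ∀ x, ‖F x‖ ≤ ∏ i, w (x i)) :
    ∫ x, ‖F x‖ ∂(Measure.pi fun _ => μ) ≤ (∫ x, w x ∂μ) ^ Fintype.card ι := by
  rw [← integral_fintype_prod_eq_pow]
  exact integral_mono_of_nonneg (.of_forall fun _ => norm_nonneg _)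
    (Integrable.fintype_prod fun _ => hw) (.of_forall hle)

theorem integrable_det_of_kernel {n : ℕ} {L : Fin n → X × X → ℂ} (hLm : ∀ i, Measurable (L i))
    {W : X → ℝ} (hWi : Integrable W μ) (hW : ∀ x, 0 ≤ W x) (hL : ∀ i x y, ‖L i (x, y)‖ ≤ W x) :
    Integrable (fun x : Fin n → X => (Matrix.of fun i j => L i (x i, x j)).det)
      (Measure.pi fun _ => μ) :=
  integrable_of_norm_le_prod (measurable_det_of_kernel hLm).aestronglyMeasurable
    (hWi.const_mul √n) (norm_det_of_kernel_le hW hL)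

theorem fredholmTermAbs_le {K : X × X → ℂ} {W : X → ℝ} (hWi : Integrable W μ)
    (hW : ∀ x, 0 ≤ W x) (hK : ∀ x y, ‖K (x, y)‖ ≤ W x) (n : ℕ) :
    fredholmTermAbs μ K n ≤ (n : ℝ) ^ ((n : ℝ) / 2) * (∫ x, W x ∂μ) ^ n := by
  have := integral_norm_le_pow_of_norm_le_prod (hWi.const_mul √n)
    (norm_det_of_kernel_le (L := fun _ => K) hW fun _ => hK)
  rwa [integral_const_mul, Fintype.card_fin, mul_pow, ← Real.rpow_natCast √n,
    ← Real.rpow_div_two_eq_sqrt _ n.cast_nonneg] at this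

theorem norm_fredholmTerm_le_fredholmTermAbs (K : X × X → ℂ) (n : ℕ) :
    ‖fredholmTerm μ K n‖ ≤ fredholmTermAbs μ K n :=
  norm_integral_le_integral_norm _

section Perturbation

variable {K K₁ : X × X → ℂ} {W : X → ℝ} (hKm : Measurable K) (hK₁m : Measurable K₁)
  (hWi : Integrable W μ) (hW : ∀ x, 0 ≤ W x)
  (hK : ∀ x y, ‖K (x, y)‖ ≤ W x) (hK₁ : ∀ x y, ‖K₁ (x, y)‖ ≤ W x)
include hWi hW hK hK₁

theorem integral_perturbationIntegrand_le (k : ℕ) :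
    ∫ x, perturbationIntegrand K (K₁ - K) k x ∂(Measure.pi fun _ => μ) ≤
      (√5 * ∫ x, W x ∂μ) ^ (k + 1) := by
  have := integral_norm_le_pow_of_norm_le_prod (hWi.const_mul √5) fun x => by
    rw [Real.norm_of_nonneg (perturbationIntegrand_nonneg _ _ _ _)]
    exact perturbationIntegrand_le_prod hW hK (norm_sub_kernel_le hK hK₁) k x
  simp_rw [Real.norm_of_nonneg (perturbationIntegrand_nonneg _ _ _ _)] at this
  rwa [integral_const_mul, Fintype.card_fin] at this

theorem summable_perturbationBound :
    Summable fun k : ℕ => 2 ^ (k + 1) * ((k : ℝ) + 1) ^ (((k : ℝ) + 1) / 2) / k ! *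
      ∫ x, perturbationIntegrand K (K₁ - K) k x ∂(Measure.pi fun _ => μ) := by
  have hB : 0 ≤ ∫ x, W x ∂μ := integral_nonneg hW
  refine (summable_pow_succ_mul_rpow_half_div_factorial (C := 2 * (√5 * ∫ x, W x ∂μ))
    (by positivity)).of_nonneg_of_le
    (fun k => mul_nonneg (by positivity)
      (integral_nonneg fun x => perturbationIntegrand_nonneg _ _ k x))
    fun k => ?_
  calc _ ≤ 2 ^ (k + 1) * ((k : ℝ) + 1) ^ (((k : ℝ) + 1) / 2) / k ! *
        (√5 * ∫ x, W x ∂μ) ^ (k + 1) := by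
        gcongr
        exact integral_perturbationIntegrand_le hWi hW hK hK₁ k
    _ = _ := by ring

include hKm hK₁m

theorem integrable_perturbationIntegrand (k : ℕ) :
    Integrable (perturbationIntegrand K (K₁ - K) k) (Measure.pi fun _ => μ) :=
  integrable_of_norm_le_prod
    (measurable_perturbationIntegrand hKm (hK₁m.sub hKm) k).aestronglyMeasurable
    (hWi.const_mul √5) fun x => by
      rw [Real.norm_of_nonneg (perturbationIntegrand_nonneg _ _ _ _)]
      exact perturbationIntegrand_le_prod hW hK (norm_sub_kernel_le hK hK₁) k x

theorem norm_integral_det_telescopingKernel_le {k : ℕ} (m : Fin (k + 1)) :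
    ‖∫ x, (Matrix.of fun i j => telescopingKernel K K₁ m i (x i, x j)).det
        ∂(Measure.pi fun _ => μ)‖ ≤
      √2 ^ k * √((k : ℝ) + 1) ^ (k + 1) *
        ∫ x, perturbationIntegrand K (K₁ - K) k x ∂(Measure.pi fun _ => μ) := by
  -- Relabelling the points by the swap of `0` and `m` moves the row of `K₁ - K` to the top.
  set τ := Equiv.swap 0 m
  have hτ (a : Fin (k + 1)) (ha : a ≠ 0) : τ a ≠ m := by
    simpa [τ, Equiv.swap_apply_eq_iff] using ha
  rw [← integral_const_mul]
  refine (norm_integral_le_integral_norm _).trans ?_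
  rw [← integral_comp_perm_pi τ]
  refine integral_mono_of_nonneg (.of_forall fun _ => norm_nonneg _)
    ((integrable_perturbationIntegrand hKm hK₁m hWi hW hK hK₁ k).const_mul _)
    (.of_forall fun x => ?_)
  simp only [Function.comp_apply, Matrix.det_of_comp_perm, τ, Equiv.symm_swap]
  exact norm_det_le_perturbationIntegrand (by simp [τ, telescopingKernel_self])
    (fun a ha => telescopingKernel_of_ne K K₁ (hτ a ha)) x

theorem norm_fredholmTerm_sub_le (k : ℕ) :
    ‖fredholmTerm μ K₁ (k + 1) - fredholmTerm μ K (k + 1)‖ ≤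
      ((k : ℝ) + 1) * (√2 ^ k * √((k : ℝ) + 1) ^ (k + 1)) *
        ∫ x, perturbationIntegrand K (K₁ - K) k x ∂(Measure.pi fun _ => μ) := by
  have hW2 (x : X) : 0 ≤ 2 * W x := by linarith [hW x]
  have hint (L : X × X → ℂ) (hLm : Measurable L) (hL : ∀ x y, ‖L (x, y)‖ ≤ 2 * W x) :=
    integrable_det_of_kernel (L := fun _ : Fin (k + 1) => L) (fun _ => hLm) (hWi.const_mul 2) hW2
      fun _ => hL
  rw [fredholmTerm, fredholmTerm,
    ← integral_sub (hint K₁ hK₁m fun x y => (hK₁ x y).trans (by linarith [hW x]))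
      (hint K hKm fun x y => (hK x y).trans (by linarith [hW x]))]
  simp_rw [det_of_kernel_sub_det_of_kernel]
  rw [integral_finsetSum _ fun m _ => integrable_det_of_kernel (fun i => ?_) (hWi.const_mul 2) hW2
    (norm_telescopingKernel_le hW hK hK₁ m)]
  · calc _ ≤ ∑ m : Fin (k + 1),
            ‖∫ x, (Matrix.of fun i j => telescopingKernel K K₁ m i (x i, x j)).det
              ∂(Measure.pi fun _ => μ)‖ := norm_sum_le _ _
      _ ≤ ∑ _m : Fin (k + 1), √2 ^ k * √((k : ℝ) + 1) ^ (k + 1) *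
            ∫ x, perturbationIntegrand K (K₁ - K) k x ∂(Measure.pi fun _ => μ) :=
          sum_le_sum fun m _ => norm_integral_det_telescopingKernel_le hKm hK₁m hWi hW hK hK₁ m
      _ = _ := by simp [mul_assoc]
  · rcases eq_or_ne i m with rfl | h
    · rw [telescopingKernel_self]; exact hK₁m.sub hKm
    · rcases telescopingKernel_of_ne K K₁ h with h | h <;> rw [h] <;> assumption

theorem norm_sub_fredholmSummand_le (k : ℕ) :
    ‖((k + 1)! : ℂ)⁻¹ * fredholmTerm μ K₁ (k + 1) - ((k + 1)! : ℂ)⁻¹ * fredholmTerm μ K (k + 1)‖ ≤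
      2 ^ (k + 1) * ((k : ℝ) + 1) ^ (((k : ℝ) + 1) / 2) / k ! *
        ∫ x, perturbationIntegrand K (K₁ - K) k x ∂(Measure.pi fun _ => μ) := by
  have hfac : ((k + 1)! : ℝ) = ((k : ℝ) + 1) * k ! := by push_cast [Nat.factorial_succ]; ring
  have hsqrt : ((k : ℝ) + 1) ^ (((k : ℝ) + 1) / 2) = √((k : ℝ) + 1) ^ (k + 1) := by
    rw [Real.rpow_div_two_eq_sqrt _ (by positivity)]
    exact_mod_cast Real.rpow_natCast _ (k + 1)
  have htwo : √2 ^ k ≤ 2 ^ (k + 1) :=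
    calc √2 ^ k ≤ 2 ^ k := by gcongr; exact Real.sqrt_le_iff.2 ⟨by norm_num, by norm_num⟩
      _ ≤ 2 ^ (k + 1) := pow_le_pow_right₀ one_le_two k.le_succ
  have hI : 0 ≤ ∫ x, perturbationIntegrand K (K₁ - K) k x ∂(Measure.pi fun _ => μ) :=
    integral_nonneg fun x => perturbationIntegrand_nonneg K (K₁ - K) k x
  rw [← mul_sub, norm_mul, norm_inv, Complex.norm_natCast, hsqrt]
  calc _ ≤ ((k + 1)! : ℝ)⁻¹ * (((k : ℝ) + 1) * (√2 ^ k * √((k : ℝ) + 1) ^ (k + 1)) *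
          ∫ x, perturbationIntegrand K (K₁ - K) k x ∂(Measure.pi fun _ => μ)) := by
        gcongr
        exact norm_fredholmTerm_sub_le hKm hK₁m hWi hW hK hK₁ k
    _ = √2 ^ k * √((k : ℝ) + 1) ^ (k + 1) / k ! *
          ∫ x, perturbationIntegrand K (K₁ - K) k x ∂(Measure.pi fun _ => μ) := by
        rw [hfac]; field_simp
    _ ≤ _ := by gcongr

end Perturbation

theorem summable_fredholmTermAbs_and_tsum_le {K : X × X → ℂ} {W : X → ℝ} (hWi : Integrable W μ)
    (hW : ∀ x, 0 ≤ W x) (hK : ∀ x y, ‖K (x, y)‖ ≤ W x) :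
    Summable (fun k : ℕ => ((k + 1)! : ℝ)⁻¹ * fredholmTermAbs μ K (k + 1)) ∧
      ∑' k : ℕ, ((k + 1)! : ℝ)⁻¹ * fredholmTermAbs μ K (k + 1) ≤
        ∑' k : ℕ, (∫ x, W x ∂μ) ^ (k + 1) * ((k : ℝ) + 1) ^ (((k : ℝ) + 1) / 2) / (k + 1)! := by
  have hmaj : Summable fun k : ℕ =>
      (∫ x, W x ∂μ) ^ (k + 1) * ((k : ℝ) + 1) ^ (((k : ℝ) + 1) / 2) / (k + 1)! := by
    simpa using (summable_nat_add_iff 1).2 (summable_pow_mul_rpow_half_div_factorial (∫ x, W x ∂μ))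
  have hle (k : ℕ) : ((k + 1)! : ℝ)⁻¹ * fredholmTermAbs μ K (k + 1) ≤
      (∫ x, W x ∂μ) ^ (k + 1) * ((k : ℝ) + 1) ^ (((k : ℝ) + 1) / 2) / (k + 1)! := by
    have := fredholmTermAbs_le hWi hW hK (k + 1)
    push_cast at this
    rw [inv_mul_eq_div, mul_comm ((∫ x, W x ∂μ) ^ (k + 1))]
    gcongr
  have hs := hmaj.of_nonneg_of_le
    (fun k => mul_nonneg (by positivity) (integral_nonneg fun _ => norm_nonneg _)) hle
  exact ⟨hs, hs.tsum_le_tsum hle hmaj⟩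

theorem summable_fredholmSummand {K : X × X → ℂ}
    (h : Summable fun k : ℕ => ((k + 1)! : ℝ)⁻¹ * fredholmTermAbs μ K (k + 1)) :
    Summable fun k : ℕ => ((k + 1)! : ℂ)⁻¹ * fredholmTerm μ K (k + 1) :=
  h.of_norm_bounded fun k => by
    rw [norm_mul, norm_inv, Complex.norm_natCast]
    gcongr
    exact norm_fredholmTerm_le_fredholmTermAbs K (k + 1)

end Integrals

/-- Lemma on closeness of Fredholm determinants of two kernels dominated by an
integrable function, in terms of the perturbation `K' = K₁ − K`. -/
theorem stmt_19 {X : Type*} [MeasurableSpace X] (μ : Measure X) [SigmaFinite μ]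
    (K K₁ : X × X → ℂ) (hKm : Measurable K) (hK₁m : Measurable K₁)
    (Kbd : X → ℝ) (hKbd : Integrable Kbd μ)
    (hbdK : ∀ x y : X, ‖K (x, y)‖ ≤ Kbd x) (hbdK₁ : ∀ x y : X, ‖K₁ (x, y)‖ ≤ Kbd x)
    (B : ℝ) (hB : B = ∫ x, Kbd x ∂μ)
    (K' : X × X → ℂ) (hK' : K' = K₁ - K) :
    (Summable (fun k : ℕ => (((k + 1).factorial : ℝ))⁻¹ * fredholmTermAbs μ K (k + 1)) ∧
     Summable (fun k : ℕ => (((k + 1).factorial : ℝ))⁻¹ * fredholmTermAbs μ K₁ (k + 1)) ∧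
     (∑' k : ℕ, (((k + 1).factorial : ℝ))⁻¹ * fredholmTermAbs μ K (k + 1))
        ≤ ∑' k : ℕ, B ^ (k + 1) * (((k : ℝ) + 1) ^ (((k : ℝ) + 1) / 2))
            / ((k + 1).factorial : ℝ) ∧
     (∑' k : ℕ, (((k + 1).factorial : ℝ))⁻¹ * fredholmTermAbs μ K₁ (k + 1))
        ≤ ∑' k : ℕ, B ^ (k + 1) * (((k : ℝ) + 1) ^ (((k : ℝ) + 1) / 2))
            / ((k + 1).factorial : ℝ)) ∧
    ‖(∑' k : ℕ, (((k + 1).factorial : ℂ))⁻¹ * fredholmTerm μ K₁ (k + 1))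
        - ∑' k : ℕ, (((k + 1).factorial : ℂ))⁻¹ * fredholmTerm μ K (k + 1)‖
      ≤ ∑' k : ℕ,
          (2 ^ (k + 1) * (((k : ℝ) + 1) ^ (((k : ℝ) + 1) / 2)) / (k.factorial : ℝ)) *
            ∫ x : Fin (k + 1) → X,
              Real.sqrt ((((k : ℝ) + 1))⁻¹ * ∑ j : Fin (k + 1), ‖K' (x 0, x j)‖ ^ 2) *
              ∏ i ∈ Finset.univ.erase (0 : Fin (k + 1)),
                Real.sqrt ((((k : ℝ) + 1))⁻¹ *
                  ∑ j : Fin (k + 1), (‖K (x i, x j)‖ ^ 2 + ‖K' (x i, x j)‖ ^ 2))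
              ∂(Measure.pi fun _ => μ) := by
  subst hB hK'
  have hW (x : X) : 0 ≤ Kbd x := (norm_nonneg _).trans (hbdK x x)
  obtain ⟨hsK, hleK⟩ := summable_fredholmTermAbs_and_tsum_le hKbd hW hbdK
  obtain ⟨hsK₁, hleK₁⟩ := summable_fredholmTermAbs_and_tsum_le hKbd hW hbdK₁
  refine ⟨⟨hsK, hsK₁, hleK, hleK₁⟩, ?_⟩
  rw [← (summable_fredholmSummand hsK₁).tsum_sub (summable_fredholmSummand hsK)]
  exact tsum_of_norm_bounded (summable_perturbationBound hKbd hW hbdK hbdK₁).hasSum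
    (norm_sub_fredholmSummand_le hKm hK₁m hKbd hW hbdK hbdK₁)
end
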